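/- arXiv:math/0501535 — 4 statements merged into one kernel-verified Lean document; each statement's English description precedes it below -/
import Mathlib

section
/- Let R be a commutative ring, I ⊆ R an ideal, and z ∈ I a non-zerodivisor of R with (z) ≠ I. Then for every R-module homomorphism f : I → R, the pair z, f(z) is NOT a regular sequence on R; indeed, any w ∈ I with w ∉ (z) satisfies w·f(z) = z·f(w) ∈ (z), so f(z) is a zerodivisor on R/(z). -/
open Pointwise in
lemma smul_top_eq_span_singleton' {R : Type*} [CommRing R] (z : R) :
    z • (⊤ : Submodule R R) = (Ideal.span {z} : Ideal R) := by
  ext x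
  rw [show z • (⊤ : Submodule R R) = Submodule.map (DistribSMul.toLinearMap R R z) ⊤
    from rfl, Submodule.mem_map]
  simp [Ideal.mem_span_singleton, dvd_def, eq_comm, smul_eq_mul, DistribSMul.toLinearMap_apply]

/-- If `z ∈ I` is a non-zerodivisor of `R` with `(z) ≠ I`, then for every `f : I → R`,
the pair `z, f(z)` is not a regular sequence on `R`: any `w ∈ I` with `w ∉ (z)` satisfies
`w·f(z) = z·f(w) ∈ (z)`, and `f(z)` is a zerodivisor on `R/(z)`. -/
theorem residual_not_regular_sequence {R : Type*} [CommRing R] (I : Ideal R) (z : R)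
    (hzI : z ∈ I) (hz : z ∈ nonZeroDivisors R) (hne : Ideal.span {z} ≠ I) :
    ∀ f : I →ₗ[R] R,
      (∀ w, ∀ hw : w ∈ I, w ∉ Ideal.span {z} →
        w * f ⟨z, hzI⟩ = z * f ⟨w, hw⟩ ∧ w * f ⟨z, hzI⟩ ∈ Ideal.span {z}) ∧
      ¬ IsSMulRegular (R ⧸ Ideal.span {z}) (f ⟨z, hzI⟩) ∧
      ¬ RingTheory.Sequence.IsRegular R [z, f ⟨z, hzI⟩] := by
  intro f
  have key : ∀ w (hw : w ∈ I), w * f ⟨z, hzI⟩ = z * f ⟨w, hw⟩ := by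
    intro w hw
    have h1 : w • (⟨z, hzI⟩ : I) = z • (⟨w, hw⟩ : I) := Subtype.ext (mul_comm w z)
    calc w * f ⟨z, hzI⟩ = f (w • ⟨z, hzI⟩) := (f.map_smul w _).symm
      _ = f (z • ⟨w, hw⟩) := by rw [h1]
      _ = z * f ⟨w, hw⟩ := f.map_smul z _
  -- pick w ∈ I \ (z)
  have hlt : Ideal.span {z} < I :=
    lt_of_le_of_ne (by rwa [Ideal.span_le, Set.singleton_subset_iff]) hne
  obtain ⟨w, hwI, hwz⟩ := SetLike.exists_of_lt hlt
  have hnotreg : ¬ IsSMulRegular (R ⧸ Ideal.span {z}) (f ⟨z, hzI⟩) := by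
    intro hreg
    have h0 : f ⟨z, hzI⟩ • (Ideal.Quotient.mk (Ideal.span {z}) w) =
        f ⟨z, hzI⟩ • (0 : R ⧸ Ideal.span {z}) := by
      rw [smul_zero]
      show Ideal.Quotient.mk (Ideal.span {z}) (f ⟨z, hzI⟩ * w) = 0
      rw [Ideal.Quotient.eq_zero_iff_mem, mul_comm, key w hwI]
      exact Ideal.mem_span_singleton.2 ⟨f ⟨w, hwI⟩, rfl⟩
    have := hreg h0
    rw [Ideal.Quotient.eq_zero_iff_mem] at this
    exact hwz this
  refine ⟨fun w hw hwz => ⟨key w hw, ?_⟩, hnotreg, ?_⟩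
  · rw [key w hw]
    exact Ideal.mem_span_singleton.2 ⟨f ⟨w, hw⟩, rfl⟩
  · intro hreg
    rw [RingTheory.Sequence.isRegular_cons_iff] at hreg
    obtain ⟨-, hreg⟩ := hreg
    rw [RingTheory.Sequence.isRegular_cons_iff] at hreg
    obtain ⟨hreg, -⟩ := hreg
    apply hnotreg
    exact ((Submodule.quotEquivOfEq _ _ (smul_top_eq_span_singleton' z)).isSMulRegular_congr _).mp hreg
end

section
/- Fix n ≥ 1. In the polynomial ring O_amb = ℤ[a_{ij}, z_j] (1 ≤ i ≤ n, 1 ≤ j ≤ n+1), the generic linear forms f_1, ..., f_n, where f_i = Σ_{j=1}^{n+1} a_{ij} z_j, form a regular sequence. -/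
open MvPolynomial

/-- The ambient polynomial ring `O_amb = ℤ[a_{ij}, z_j]`, `1 ≤ i ≤ n`, `1 ≤ j ≤ n+1`. -/
noncomputable abbrev Oamb (n : ℕ) : Type := MvPolynomial ((Fin n × Fin (n+1)) ⊕ Fin (n+1)) ℤ

/-- The generic matrix entry `a_{ij}` as an element of `O_amb`. -/
noncomputable def av {n : ℕ} (i : Fin n) (j : Fin (n+1)) : Oamb n := X (Sum.inl (i, j))

/-- The variable `z_j` as an element of `O_amb`. -/
noncomputable def zv {n : ℕ} (j : Fin (n+1)) : Oamb n := X (Sum.inr j)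

/-- The generic linear form `f_i = Σ_j a_{ij} z_j`. -/
noncomputable def fv {n : ℕ} (i : Fin n) : Oamb n := ∑ j, av i j * zv j

/-- `Δ₁`: the determinant of the `n × n` submatrix of `(a_{ij})` obtained by deleting the
first column. -/
noncomputable def Δ₁ (n : ℕ) : Oamb n := Matrix.det (Matrix.of fun i j : Fin n => av i j.succ)


open MvPolynomial

section McCoy

variable {A : Type*} [CommRing A]

/-- helper: elements of a span are killed by common annihilators of generators -/
lemma mul_eq_zero_of_forall_gen {S : Set A} {w b : A}
    (hS : ∀ s ∈ S, w * s = 0) (hb : b ∈ Ideal.span S) : w * b = 0 := by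
  induction hb using Submodule.span_induction with
  | mem x hx => exact hS x hx
  | zero => simp
  | add x y _ _ hx hy => rw [mul_add, hx, hy, add_zero]
  | smul a x _ hx => rw [smul_eq_mul, mul_left_comm, hx, mul_zero]

open Polynomial in
/-- Tracked univariate McCoy: if `F * G = 0` with `G ≠ 0` then some nonzero element of the
ideal generated by the coefficients of `G` annihilates `F`. -/
lemma tracked_mccoy_poly : ∀ (d : ℕ) (G F : Polynomial A), G ≠ 0 → G.natDegree ≤ d →
    F * G = 0 →
    ∃ a : A, a ≠ 0 ∧ a ∈ Ideal.span (Set.range G.coeff) ∧ Polynomial.C a * F = 0 := by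
  intro d
  induction d using Nat.strong_induction_on with
  | _ d IH =>
    intro G F hG hdeg hFG
    classical
    by_cases hall : ∀ i, Polynomial.C (F.coeff i) * G = 0
    · refine ⟨G.leadingCoeff, leadingCoeff_ne_zero.mpr hG,
        Ideal.subset_span ⟨G.natDegree, rfl⟩, ?_⟩
      ext j
      have h1 := congrArg (fun p => Polynomial.coeff p G.natDegree) (hall j)
      simp only [Polynomial.coeff_C_mul, Polynomial.coeff_zero] at h1 ⊢
      rw [Polynomial.leadingCoeff, mul_comm]
      exact h1
    · push_neg at hall
      obtain ⟨i₁, hi₁⟩ := hall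
      -- the property is false beyond F.natDegree
      have hbd : ∀ i, F.natDegree < i → Polynomial.C (F.coeff i) * G = 0 := by
        intro i hi
        rw [Polynomial.coeff_eq_zero_of_natDegree_lt hi]; simp
      have hi₁le : i₁ ≤ F.natDegree := by
        by_contra h; exact hi₁ (hbd i₁ (lt_of_not_ge h))
      set P : ℕ → Prop := fun i => Polynomial.C (F.coeff i) * G ≠ 0 with hP
      set i₀ := Nat.findGreatest P F.natDegree with hi₀def
      have hPi₀ : P i₀ := Nat.findGreatest_spec hi₁le hi₁
      have hmax : ∀ m, i₀ < m → Polynomial.C (F.coeff m) * G = 0 := by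
        intro m hm
        by_cases hmle : m ≤ F.natDegree
        · by_contra hne
          exact Nat.findGreatest_is_greatest hm hmle hne
        · exact hbd m (lt_of_not_ge hmle)
      set G' := Polynomial.C (F.coeff i₀) * G with hG'def
      have hG' : G' ≠ 0 := hPi₀
      have hFG' : F * G' = 0 := by
        rw [hG'def, mul_comm (Polynomial.C (F.coeff i₀)) G, ← mul_assoc, hFG, zero_mul]
      -- coefficient of G' at natDegree G vanishes
      have hcoeff : G'.coeff G.natDegree = 0 := by
        have h0 : (F * G).coeff (i₀ + G.natDegree) = 0 := by rw [hFG]; simp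
        rw [Polynomial.coeff_mul] at h0
        have : ∑ x ∈ Finset.HasAntidiagonal.antidiagonal (i₀ + G.natDegree), F.coeff x.1 * G.coeff x.2
            = F.coeff i₀ * G.coeff G.natDegree := by
          refine Finset.sum_eq_single_of_mem (i₀, G.natDegree) (Finset.HasAntidiagonal.mem_antidiagonal.mpr rfl) ?_
          rintro ⟨p, q⟩ hpq hne
          have hpq' : p + q = i₀ + G.natDegree := Finset.HasAntidiagonal.mem_antidiagonal.mp hpq
          rcases lt_trichotomy p i₀ with hlt | heq | hgt
          · have : G.natDegree < q := by omega
            rw [Polynomial.coeff_eq_zero_of_natDegree_lt this, mul_zero]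
          · exfalso; apply hne; have : q = G.natDegree := by omega
            simp [heq, this]
          · have := congrArg (fun p' => Polynomial.coeff p' q) (hmax p hgt)
            simpa [Polynomial.coeff_C_mul] using this
        rw [this] at h0
        simpa [hG'def, Polynomial.coeff_C_mul] using h0
      have hdeg' : G'.natDegree < G.natDegree := by
        have hle : G'.natDegree ≤ G.natDegree := Polynomial.natDegree_C_mul_le _ _
        rcases lt_or_eq_of_le hle with h | h
        · exact h
        · exfalso
          apply hG'
          have : G'.leadingCoeff = 0 := by rw [Polynomial.leadingCoeff, h, hcoeff]
          exact Polynomial.leadingCoeff_eq_zero.mp this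
      have hdGpos : G'.natDegree < d := lt_of_lt_of_le hdeg' hdeg
      obtain ⟨a, ha0, hamem, haF⟩ := IH G'.natDegree hdGpos G' F hG' le_rfl hFG'
      refine ⟨a, ha0, ?_, haF⟩
      have hsub : Ideal.span (Set.range G'.coeff) ≤ Ideal.span (Set.range G.coeff) := by
        rw [Ideal.span_le]
        rintro x ⟨j, rfl⟩
        have : G'.coeff j = F.coeff i₀ * G.coeff j := by
          rw [hG'def, Polynomial.coeff_C_mul]
        rw [this]
        exact Ideal.mul_mem_left _ _ (Ideal.subset_span ⟨j, rfl⟩)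
      exact hsub hamem

end McCoy

open MvPolynomial

section MvHelpers

variable {B : Type*} [CommRing B] {τ : Type*}

/-- coefficients of elements of a span lie in any ideal containing all coefficients
of the generators. -/
lemma coeff_mem_of_mem_span {S : Set (MvPolynomial τ B)} {J : Ideal B}
    (hS : ∀ s ∈ S, ∀ μ, coeff μ s ∈ J) {x : MvPolynomial τ B}
    (hx : x ∈ Ideal.span S) : ∀ μ, coeff μ x ∈ J := by
  classical
  induction hx using Submodule.span_induction with
  | mem s hs => exact hS s hs
  | zero => intro μ; simp
  | add x y _ _ hx hy => intro μ; rw [coeff_add]; exact J.add_mem (hx μ) (hy μ)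
  | smul a x _ hx =>
    intro μ
    rw [smul_eq_mul, coeff_mul]
    exact Ideal.sum_mem _ fun p _ => Ideal.mul_mem_left _ _ (hx p.2)

end MvHelpers

section LinMcCoy

variable {B : Type*} [CommRing B]

/-- Multivariate McCoy theorem for linear forms, with coefficient tracking. -/
lemma mv_linear_mccoy : ∀ (m : ℕ) (z : Fin m → B) (g : MvPolynomial (Fin m) B), g ≠ 0 →
    g * (∑ j, C (z j) * X j) = 0 →
    ∃ b : B, b ≠ 0 ∧ b ∈ Ideal.span (Set.range fun μ => coeff μ g) ∧ ∀ j, z j * b = 0 := by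
  intro m
  induction m with
  | zero =>
    intro z g hg _
    refine ⟨coeff 0 g, ?_, Ideal.subset_span ⟨0, rfl⟩, fun j => j.elim0⟩
    intro h0
    apply hg
    ext μ
    rw [Subsingleton.elim μ 0, h0, coeff_zero]
  | succ m IH =>
    intro z g hg hzero
    set φ := finSuccEquiv B m with hφ
    set G := φ g with hG
    have hGne : G ≠ 0 := by
      intro h
      apply hg
      rw [hG] at h
      have := congrArg φ.symm h
      simpa using this
    set ftil : MvPolynomial (Fin m) B := ∑ j, C (z j.succ) * X j with hftil
    have himg : φ (∑ j, C (z j) * X j)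
        = Polynomial.C (C (z 0)) * Polynomial.X + Polynomial.C ftil := by
      rw [Fin.sum_univ_succ]
      rw [map_add, map_mul, map_sum]
      congr 1
      · have h1 : φ (C (z 0)) = Polynomial.C (C (z 0)) := by
          simpa using φ.commutes (z 0)
        rw [h1, finSuccEquiv_X_zero]
      · rw [hftil, map_sum]
        congr 1
        funext j
        rw [map_mul, map_mul]
        have h1 : φ (C (z j.succ)) = Polynomial.C (C (z j.succ)) := by
          simpa using φ.commutes (z j.succ)
        rw [h1, finSuccEquiv_X_succ]
    have hFG : (Polynomial.C (C (z 0)) * Polynomial.X + Polynomial.C ftil) * G = 0 := by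
      rw [← himg, hG, ← map_mul, mul_comm, hzero, map_zero]
    obtain ⟨a, ha0, hamem, haF⟩ := tracked_mccoy_poly G.natDegree G _ hGne le_rfl hFG
    -- extract the two coefficient identities
    have hexp : Polynomial.C a * (Polynomial.C (C (z 0)) * Polynomial.X + Polynomial.C ftil)
        = Polynomial.C (a * C (z 0)) * Polynomial.X + Polynomial.C (a * ftil) := by
      rw [mul_add, ← mul_assoc, ← Polynomial.C_mul, ← Polynomial.C_mul]
    rw [hexp] at haF
    have ha1 : a * C (z 0) = 0 := by
      have := congrArg (fun p => Polynomial.coeff p 1) haF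
      simpa using this
    have ha0' : a * ftil = 0 := by
      have := congrArg (fun p => Polynomial.coeff p 0) haF
      simpa using this
    obtain ⟨b, hb0, hbmem, hbz⟩ := IH (fun j => z j.succ) a ha0 ha0'
    refine ⟨b, hb0, ?_, ?_⟩
    · -- b ∈ span of coefficients of g
      have hstep : ∀ s ∈ Set.range G.coeff, ∀ μ,
          coeff μ s ∈ Ideal.span (Set.range fun ν => coeff ν g) := by
        rintro s ⟨i, rfl⟩ μ
        have : coeff μ (G.coeff i) = coeff (Finsupp.cons i μ) g := by
          rw [hG, hφ]; exact finSuccEquiv_coeff_coeff μ g i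
        rw [this]
        exact Ideal.subset_span ⟨_, rfl⟩
      have hacoeff : ∀ μ, coeff μ a ∈ Ideal.span (Set.range fun ν => coeff ν g) :=
        coeff_mem_of_mem_span hstep hamem
      have : Ideal.span (Set.range fun μ => coeff μ a)
          ≤ Ideal.span (Set.range fun ν => coeff ν g) := by
        rw [Ideal.span_le]; rintro x ⟨μ, rfl⟩; exact hacoeff μ
      exact this hbmem
    · intro j
      refine Fin.cases ?_ ?_ j
      · -- z 0 * b = 0 : z 0 kills all coefficients of a
        have hkill : ∀ s ∈ Set.range (fun μ => coeff μ a), z 0 * s = 0 := by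
          rintro s ⟨μ, rfl⟩
          have h2 := congrArg (coeff μ) ha1
          rw [mul_comm] at h2
          rw [MvPolynomial.coeff_C_mul] at h2
          simpa using h2
        exact mul_eq_zero_of_forall_gen hkill hbmem
      · intro i; exact hbz i

end LinMcCoy

open MvPolynomial

section Kill

variable {R : Type*} [CommRing R] {σ : Type*}

open Classical in
/-- The substitution which kills the variable `v`. -/
noncomputable def kil (v : σ) : MvPolynomial σ R →ₐ[R] MvPolynomial σ R :=
  aeval (fun w => if w = v then 0 else X w)

@[simp] lemma kil_X_self (v : σ) : kil (R := R) v (X v) = 0 := by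
  classical
  rw [kil, aeval_X]
  simp

lemma kil_X_ne (v : σ) {w : σ} (h : w ≠ v) : kil (R := R) v (X w) = X w := by
  classical
  rw [kil, aeval_X]
  simp [h]

lemma sub_kil_mem (v : σ) (p : MvPolynomial σ R) :
    p - kil v p ∈ Ideal.span {(X v : MvPolynomial σ R)} := by
  induction p using MvPolynomial.induction_on with
  | C a => rw [kil, aeval_C]; simp
  | add p q hp hq =>
    have : p + q - kil v (p + q) = (p - kil v p) + (q - kil v q) := by
      rw [map_add]; ring
    rw [this]; exact Ideal.add_mem _ hp hq
  | mul_X p w hp =>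
    have : p * X w - kil v (p * X w)
        = (p - kil v p) * X w + kil v p * (X w - kil v (X w)) := by
      rw [map_mul]; ring
    rw [this]
    refine Ideal.add_mem _ (Ideal.mul_mem_right _ _ hp) ?_
    by_cases hw : w = v
    · subst hw; rw [kil_X_self, sub_zero]
      exact Ideal.mul_mem_left _ _ (Ideal.subset_span rfl)
    · rw [kil_X_ne v hw, sub_self, mul_zero]; exact Ideal.zero_mem _

/-- The variable-regularity trick: if all generators of `S` are fixed by killing `v`,
then `X v` is a nonzerodivisor modulo the span of `S`. -/
lemma var_colon [IsDomain R] {S : Set (MvPolynomial σ R)} {v : σ}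
    (hS : ∀ g ∈ S, kil (R := R) v g = g) :
    ∀ u : MvPolynomial σ R, u * X v ∈ Ideal.span S → u ∈ Ideal.span S := by
  classical
  intro u hu
  rw [Ideal.span, Submodule.mem_span_set] at hu
  obtain ⟨c, hsupp, hsum⟩ := hu
  -- apply kil v to the representation
  have hkil : (c.sum fun g cg => kil (R := R) v cg * g) = 0 := by
    have h1 : kil (R := R) v (c.sum fun g cg => cg • g) = kil v (u * X v) := by rw [hsum]
    rw [map_finsuppSum (kil (R := R) v)] at h1
    rw [map_mul, kil_X_self, mul_zero] at h1
    have h2 : (c.sum fun g cg => kil (R := R) v (cg • g))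
        = c.sum fun g cg => kil v cg * g := by
      apply Finsupp.sum_congr
      intro g hg
      rw [smul_eq_mul, map_mul, hS g (hsupp hg)]
    rw [← h2, h1]
  -- decompose each coefficient
  have hchoose : ∀ g ∈ c.support, ∃ h, c g - kil (R := R) v (c g) = h * X v := by
    intro g _
    obtain ⟨a, ha⟩ := Ideal.mem_span_singleton'.mp (sub_kil_mem v (c g))
    exact ⟨a, ha.symm⟩
  choose hfun hfeq using hchoose
  set w := ∑ g ∈ c.support.attach, hfun g.1 g.2 * g.1 with hw
  have hwmem : w ∈ Ideal.span S := by
    rw [hw]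
    refine Ideal.sum_mem _ ?_
    rintro ⟨g, hg⟩ _
    exact Ideal.mul_mem_left _ _ (Ideal.subset_span (hsupp hg))
  have hkey : u * X v = w * X v := by
    have h3 : u * X v = ∑ g ∈ c.support.attach, c g.1 * g.1 := by
      rw [← hsum, Finsupp.sum, ← Finset.sum_attach]
      simp [smul_eq_mul]
    have h4 : (0 : MvPolynomial σ R) = ∑ g ∈ c.support.attach, kil (R := R) v (c g.1) * g.1 := by
      rw [← hkil, Finsupp.sum, ← Finset.sum_attach]
    have h5 : u * X v = ∑ g ∈ c.support.attach,
        (c g.1 - kil (R := R) v (c g.1)) * g.1 := by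
      rw [h3]
      conv_lhs => rw [← sub_zero (∑ g ∈ c.support.attach, c g.1 * g.1)]
      rw [show (0 : MvPolynomial σ R) = ∑ g ∈ c.support.attach,
        kil (R := R) v (c g.1) * g.1 from h4, ← Finset.sum_sub_distrib]
      congr 1; funext g; ring
    rw [h5, hw, Finset.sum_mul]
    apply Finset.sum_congr rfl
    rintro ⟨g, hg⟩ _
    rw [hfeq g hg]; ring
  have hXne : (X v : MvPolynomial σ R) ≠ 0 := X_ne_zero v
  have : u = w := by
    have := mul_right_cancel₀ hXne hkey
    exact this
  rw [this]; exact hwmem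

end Kill

/-- truncated generic forms: `f_i^{(s)} = ∑_{j ≥ s} a_{ij} z_j` -/
noncomputable def Ff {n : ℕ} (s : ℕ) (i : Fin n) : Oamb n :=
  ∑ j : Fin (n+1), if s ≤ (j : ℕ) then av i j * zv j else 0

section Transport

variable {n : ℕ}

/-- the variables other than those in row `r` -/
@[reducible] def rty (n : ℕ) (r : Fin n) : Type :=
  {p : Fin n × Fin (n+1) // p.1 ≠ r} ⊕ Fin (n+1)

open Classical in
/-- splitting off the row-`r` variables -/
noncomputable def esig (n : ℕ) (r : Fin n) :
    ((Fin n × Fin (n+1)) ⊕ Fin (n+1)) ≃ (Fin (n+1) ⊕ rty n r) where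
  toFun x := match x with
    | Sum.inl p => if h : p.1 = r then Sum.inl p.2 else Sum.inr (Sum.inl ⟨p, h⟩)
    | Sum.inr j => Sum.inr (Sum.inr j)
  invFun y := match y with
    | Sum.inl j => Sum.inl (r, j)
    | Sum.inr (Sum.inl q) => Sum.inl q.1
    | Sum.inr (Sum.inr j) => Sum.inr j
  left_inv x := by
    rcases x with p | j
    · by_cases h : p.1 = r
      · simp only [dif_pos h]; cases p; simp_all
      · simp only [dif_neg h]
    · rfl
  right_inv y := by
    rcases y with j | (q | j)
    · simp
    · rcases q with ⟨p, hp⟩; simp only [dif_neg hp]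
    · rfl

/-- the transport algebra equivalence -/
noncomputable def eqv (n : ℕ) (r : Fin n) :
    Oamb n ≃ₐ[ℤ] MvPolynomial (Fin (n+1)) (MvPolynomial (rty n r) ℤ) :=
  (renameEquiv ℤ (esig n r)).trans (sumAlgEquiv ℤ (Fin (n+1)) (rty n r))

lemma eqv_av_self (r : Fin n) (j : Fin (n+1)) : eqv n r (av r j) = X j := by
  rw [eqv, av]
  simp only [AlgEquiv.trans_apply, renameEquiv_apply, rename_X]
  have h1 : esig n r (Sum.inl (r, j)) = Sum.inl j := by
    simp [esig]
  rw [h1]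
  exact sumAlgEquiv_X_inl ℤ _ _ j

lemma eqv_av_ne (r : Fin n) {i : Fin n} (h : i ≠ r) (j : Fin (n+1)) :
    eqv n r (av i j) = C (X (Sum.inl ⟨(i, j), h⟩)) := by
  rw [eqv, av]
  simp only [AlgEquiv.trans_apply, renameEquiv_apply, rename_X]
  have h1 : esig n r (Sum.inl (i, j)) = Sum.inr (Sum.inl ⟨(i, j), h⟩) := by
    simp [esig, h]
  rw [h1]
  exact sumAlgEquiv_X_inr ℤ _ _ _

lemma eqv_zv (r : Fin n) (j : Fin (n+1)) :
    eqv n r (zv j) = C (X (Sum.inr j)) := by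
  rw [eqv, zv]
  simp only [AlgEquiv.trans_apply, renameEquiv_apply, rename_X]
  have h1 : esig n r (Sum.inr j) = Sum.inr (Sum.inr j) := rfl
  rw [h1]
  exact sumAlgEquiv_X_inr ℤ _ _ _

lemma eqv_Ff_self (r : Fin n) (s : ℕ) :
    eqv n r (Ff s r) = ∑ j : Fin (n+1),
      if s ≤ (j : ℕ) then X j * C (X (Sum.inr j) : MvPolynomial (rty n r) ℤ) else 0 := by
  rw [Ff, map_sum]
  apply Finset.sum_congr rfl
  intro j _
  rw [apply_ite (eqv n r), map_zero, map_mul, eqv_av_self, eqv_zv]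

end Transport


section McCoyStep

variable {n : ℕ}

/-- The McCoy step: if `S` consists of polynomials not involving row `r`, and the span of `S`
has the colon property with respect to the variables `z_j`, `j ≥ s`, then `f_r^{(s)}` is a
nonzerodivisor modulo the span of `S`. -/
lemma transport_colon_step (r : Fin n) (s : ℕ) (S : Set (Oamb n))
    (hS : ∀ g ∈ S, ∃ b, eqv n r g = C b)
    (hcol : ∀ c : Oamb n, (∀ j : Fin (n+1), s ≤ (j : ℕ) → c * zv j ∈ Ideal.span S) →
      c ∈ Ideal.span S) :
    ∀ c : Oamb n, c * Ff s r ∈ Ideal.span S → c ∈ Ideal.span S := by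
  classical
  intro c hc
  set e := eqv n r with he
  set S' : Set (MvPolynomial (rty n r) ℤ) := {b | C b ∈ ⇑e '' S} with hS'
  set J' : Ideal (MvPolynomial (rty n r) ℤ) := Ideal.span S' with hJ'
  set mk := Ideal.Quotient.mk J' with hmk
  -- basic pairing
  have hpair : ∀ g ∈ S, ∃ b ∈ S', e g = C b := by
    intro g hg
    obtain ⟨b, hb⟩ := hS g hg
    exact ⟨b, Set.mem_setOf.mpr ⟨g, hg, hb⟩, hb⟩
  -- F1
  have F1 : ∀ x ∈ J', e.symm (C x) ∈ Ideal.span S := by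
    intro x hx
    induction hx using Submodule.span_induction with
    | mem b hb =>
      obtain ⟨g, hg, hgb⟩ := hb
      have : e.symm (C b) = g := by rw [← hgb]; exact e.symm_apply_apply g
      rw [this]; exact Ideal.subset_span hg
    | zero => rw [map_zero, map_zero]; exact Ideal.zero_mem _
    | add x y _ _ hx hy => rw [map_add, map_add]; exact Ideal.add_mem _ hx hy
    | smul a x _ hx =>
      rw [smul_eq_mul, C_mul, map_mul]
      exact Ideal.mul_mem_left _ _ hx
  -- membership in the image span
  have himgspan : ∀ u ∈ Ideal.span S, e u ∈ Ideal.span (⇑e '' S) := by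
    intro u hu
    have : Ideal.map (e : Oamb n →+* _) (Ideal.span S) = Ideal.span (⇑e '' S) := by
      rw [Ideal.map_span]; rfl
    rw [← this]
    exact Ideal.mem_map_of_mem _ hu
  -- F2
  have F2 : ∀ u ∈ Ideal.span S, ∀ μ, coeff μ (e u) ∈ J' := by
    intro u hu
    refine coeff_mem_of_mem_span ?_ (himgspan u hu)
    rintro t ⟨g, hg, rfl⟩ μ
    obtain ⟨b, hbS', hb⟩ := hpair g hg
    rw [hb, coeff_C]
    split
    · exact Ideal.subset_span hbS'
    · exact Ideal.zero_mem _
  -- kernel characterization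
  have kerdir : ∀ u ∈ Ideal.span S, MvPolynomial.map mk (e u) = 0 := by
    intro u hu
    ext μ
    rw [coeff_map, coeff_zero]
    exact Ideal.Quotient.eq_zero_iff_mem.mpr (F2 u hu μ)
  have kerrev : ∀ u : Oamb n, MvPolynomial.map mk (e u) = 0 → u ∈ Ideal.span S := by
    intro u hu
    have hcoef : ∀ μ, coeff μ (e u) ∈ J' := by
      intro μ
      have := congrArg (coeff μ) hu
      rw [coeff_map, coeff_zero] at this
      exact Ideal.Quotient.eq_zero_iff_mem.mp this
    have hrep : u = ∑ μ ∈ (e u).support, e.symm (C (coeff μ (e u))) * e.symm (monomial μ 1) := by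
      apply e.injective
      rw [map_sum]
      have h2 : ∀ μ ∈ (e u).support,
          e (e.symm (C (coeff μ (e u))) * e.symm (monomial μ 1))
          = monomial μ (coeff μ (e u)) := by
        intro μ _
        rw [map_mul, e.apply_symm_apply, e.apply_symm_apply, C_mul_monomial, mul_one]
      rw [Finset.sum_congr rfl h2, support_sum_monomial_coeff]
    rw [hrep]
    exact Ideal.sum_mem _ fun μ _ => Ideal.mul_mem_right _ _ (F1 _ (hcoef μ))
  -- the image of the form
  set w : Fin (n+1) → (MvPolynomial (rty n r) ℤ ⧸ J') :=
    fun j => if s ≤ (j : ℕ) then mk (X (Sum.inr j)) else 0 with hw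
  have hform : MvPolynomial.map mk (e (Ff s r)) = ∑ j : Fin (n+1), C (w j) * X j := by
    rw [he, eqv_Ff_self, map_sum]
    apply Finset.sum_congr rfl
    intro j _
    rw [apply_ite (MvPolynomial.map mk), map_zero, map_mul, MvPolynomial.map_X,
      MvPolynomial.map_C]
    by_cases hj : s ≤ (j : ℕ)
    · have hwj : w j = mk (X (Sum.inr j)) := by rw [hw]; simp [hj]
      rw [if_pos hj, hwj, mul_comm]
    · have hwj : w j = 0 := by rw [hw]; simp [hj]
      rw [if_neg hj, hwj, map_zero, zero_mul]
  -- the product vanishes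
  set g := MvPolynomial.map mk (e c) with hg
  have hprod : g * (∑ j : Fin (n+1), C (w j) * X j) = 0 := by
    rw [hg, ← hform, ← map_mul, ← map_mul]
    exact kerdir _ hc
  by_cases hgz : g = 0
  · exact kerrev c hgz
  · obtain ⟨b, hb0, _, hbz⟩ := mv_linear_mccoy (n+1) w g hgz hprod
    exfalso
    obtain ⟨b₀, rfl⟩ := Ideal.Quotient.mk_surjective b
    have hb₀ : ∀ j : Fin (n+1), s ≤ (j : ℕ) → (X (Sum.inr j) : MvPolynomial (rty n r) ℤ) * b₀ ∈ J' := by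
      intro j hj
      have := hbz j
      rw [hw] at this
      simp only [if_pos hj] at this
      rw [← map_mul] at this
      exact Ideal.Quotient.eq_zero_iff_mem.mp this
    set c₀ := e.symm (C b₀) with hc₀
    have hc₀mem : c₀ ∈ Ideal.span S := by
      apply hcol
      intro j hj
      have hcz : e (c₀ * zv j) = C ((X (Sum.inr j) : MvPolynomial (rty n r) ℤ) * b₀) := by
        rw [map_mul, hc₀, e.apply_symm_apply, he, eqv_zv, ← C_mul, mul_comm]
      have h3 : c₀ * zv j = e.symm (C ((X (Sum.inr j) : MvPolynomial (rty n r) ℤ) * b₀)) := by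
        rw [← hcz, e.symm_apply_apply]
      rw [h3]
      exact F1 _ (hb₀ j hj)
    have h4 := kerdir _ hc₀mem
    rw [hc₀, e.apply_symm_apply, MvPolynomial.map_C] at h4
    apply hb0
    exact MvPolynomial.C_injective _ _ (by rw [h4, map_zero])

end McCoyStep

section Setup

variable {n : ℕ}

/-- generators: `z_j` for `j ∈ T` together with `f_i^{(s)}` for `i < k` -/
noncomputable def gset (n : ℕ) (T : Set (Fin (n+1))) (s k : ℕ) : Set (Oamb n) :=
  zv '' T ∪ Ff s '' {i : Fin n | (i : ℕ) < k}

/-- the corresponding ideal -/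
noncomputable def Jid (n : ℕ) (T : Set (Fin (n+1))) (s k : ℕ) : Ideal (Oamb n) :=
  Ideal.span (gset n T s k)

lemma Ff_split (s : ℕ) (hsn : s < n+1) (i : Fin n) :
    Ff s i = av i ⟨s, hsn⟩ * zv ⟨s, hsn⟩ + Ff (s+1) i := by
  rw [Ff, Ff]
  have key : ∀ j : Fin (n+1), (if s ≤ (j : ℕ) then av i j * zv j else 0)
      = (if j = ⟨s, hsn⟩ then av i j * zv j else 0)
        + (if s + 1 ≤ (j : ℕ) then av i j * zv j else 0) := by
    intro j
    by_cases hj : j = ⟨s, hsn⟩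
    · subst hj
      simp
    · have hj' : (j : ℕ) ≠ s := by
        intro h; exact hj (Fin.ext h)
      rw [if_neg hj]
      by_cases h1 : s ≤ (j : ℕ)
      · rw [if_pos h1, if_pos (by omega), zero_add]
      · rw [if_neg h1, if_neg (by omega), zero_add]
  rw [Finset.sum_congr rfl (fun j _ => key j), Finset.sum_add_distrib]
  congr 1
  rw [Finset.sum_ite_eq' Finset.univ (⟨s, hsn⟩ : Fin (n+1)) (fun j => av i j * zv j)]
  simp

lemma indexset_succ (k : ℕ) (hkn : k < n) :
    {i : Fin n | (i : ℕ) < k + 1} = {i : Fin n | (i : ℕ) < k} ∪ {(⟨k, hkn⟩ : Fin n)} := by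
  ext i
  simp only [Set.mem_setOf_eq, Set.mem_union, Set.mem_singleton_iff]
  constructor
  · intro h
    rcases Nat.lt_or_ge (i : ℕ) k with h' | h'
    · exact Or.inl h'
    · right; apply Fin.ext; simp; omega
  · rintro (h | rfl)
    · omega
    · simp

lemma Jid_succ (T : Set (Fin (n+1))) (s k : ℕ) (hkn : k < n) :
    Jid n T s (k+1) = Jid n T s k ⊔ Ideal.span {Ff s ⟨k, hkn⟩} := by
  rw [Jid, Jid, ← Ideal.span_union]
  congr 1
  rw [gset, gset, indexset_succ k hkn, Set.image_union, Set.union_assoc, Set.image_singleton]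

lemma zv_mem_gset {T : Set (Fin (n+1))} {s k : ℕ} {j : Fin (n+1)} (hj : j ∈ T) :
    zv j ∈ gset n T s k := Or.inl ⟨j, hj, rfl⟩

lemma Ff_mem_gset {T : Set (Fin (n+1))} {s k : ℕ} {i : Fin n} (hi : (i : ℕ) < k) :
    Ff s i ∈ gset n T s k := Or.inr ⟨i, hi, rfl⟩

/-- the inclusion `J(T,s+1,k) ≤ J(T,s,k) ⊔ (z_s)` -/
lemma Jid_shift_le (T : Set (Fin (n+1))) (s k : ℕ) (hsn : s < n+1)
    (hT : ∀ j ∈ T, (j : ℕ) < s) :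
    Jid n T (s+1) k ≤ Jid n T s k ⊔ Ideal.span {zv ⟨s, hsn⟩} := by
  rw [Jid, Ideal.span_le]
  rintro g (⟨j, hj, rfl⟩ | ⟨i, hi, rfl⟩)
  · exact Ideal.mem_sup_left (Ideal.subset_span (zv_mem_gset hj))
  · have : Ff (s+1) i = Ff s i - av i ⟨s, hsn⟩ * zv ⟨s, hsn⟩ := by
      rw [Ff_split s hsn i]; ring
    rw [this]
    apply Submodule.sub_mem
    · exact Ideal.mem_sup_left (Ideal.subset_span (Ff_mem_gset hi))
    · exact Ideal.mem_sup_right (Ideal.mul_mem_left _ _ (Ideal.subset_span rfl))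

/-- the ideal identity `J(T,s,k) ⊔ (z_s) = J(T ∪ {s}, s+1, k)` -/
lemma Jid_insert (T : Set (Fin (n+1))) (s k : ℕ) (hsn : s < n+1)
    (hT : ∀ j ∈ T, (j : ℕ) < s) :
    Jid n T s k ⊔ Ideal.span {zv ⟨s, hsn⟩} = Jid n (insert ⟨s, hsn⟩ T) (s+1) k := by
  apply le_antisymm
  · apply sup_le
    · rw [Jid, Ideal.span_le]
      rintro g (⟨j, hj, rfl⟩ | ⟨i, hi, rfl⟩)
      · exact Ideal.subset_span (zv_mem_gset (Set.mem_insert_iff.mpr (Or.inr hj)))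
      · rw [Ff_split s hsn i]
        apply Ideal.add_mem
        · exact Ideal.mul_mem_left _ _
            (Ideal.subset_span (zv_mem_gset (Set.mem_insert _ _)))
        · exact Ideal.subset_span (Ff_mem_gset hi)
    · rw [Ideal.span_le, Set.singleton_subset_iff]
      exact Ideal.subset_span (zv_mem_gset (Set.mem_insert _ _))
  · rw [Jid, Ideal.span_le]
    rintro g (⟨j, hj, rfl⟩ | ⟨i, hi, rfl⟩)
    · rcases Set.mem_insert_iff.mp hj with rfl | hj'
      · exact Ideal.mem_sup_right (Ideal.subset_span rfl)
      · exact Ideal.mem_sup_left (Ideal.subset_span (zv_mem_gset hj'))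
    · have : Ff (s+1) i = Ff s i - av i ⟨s, hsn⟩ * zv ⟨s, hsn⟩ := by
        rw [Ff_split s hsn i]; ring
      rw [this]
      apply Submodule.sub_mem
      · exact Ideal.mem_sup_left (Ideal.subset_span (Ff_mem_gset hi))
      · exact Ideal.mem_sup_right (Ideal.mul_mem_left _ _ (Ideal.subset_span rfl))

-- kill computations
lemma kil_zv_ne {s : ℕ} (hsn : s < n+1) {j : Fin (n+1)} (hj : j ≠ ⟨s, hsn⟩) :
    kil (R := ℤ) (Sum.inr (⟨s, hsn⟩ : Fin (n+1))) (zv j) = zv j := by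
  rw [zv]
  exact kil_X_ne _ (by simp [hj])

lemma kil_zv_self {s : ℕ} (hsn : s < n+1) :
    kil (R := ℤ) (Sum.inr (⟨s, hsn⟩ : Fin (n+1))) (zv ⟨s, hsn⟩) = 0 := by
  rw [zv]; exact kil_X_self _

lemma kil_av {s : ℕ} (hsn : s < n+1) (i : Fin n) (j : Fin (n+1)) :
    kil (R := ℤ) (Sum.inr (⟨s, hsn⟩ : Fin (n+1))) (av i j) = av i j := by
  rw [av]
  exact kil_X_ne _ (by simp)

lemma kil_Ff {s : ℕ} (hsn : s < n+1) (i : Fin n) :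
    kil (R := ℤ) (Sum.inr (⟨s, hsn⟩ : Fin (n+1))) (Ff s i) = Ff (s+1) i := by
  rw [Ff, Ff, map_sum]
  apply Finset.sum_congr rfl
  intro j _
  rw [apply_ite (kil (R := ℤ) (Sum.inr (⟨s, hsn⟩ : Fin (n+1)))), map_zero, map_mul, kil_av]
  by_cases hj : j = ⟨s, hsn⟩
  · subst hj
    rw [kil_zv_self]
    simp
  · rw [kil_zv_ne hsn hj]
    have hj' : (j : ℕ) ≠ s := fun h => hj (Fin.ext h)
    by_cases h1 : s ≤ (j : ℕ)
    · rw [if_pos h1, if_pos (by omega)]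
    · rw [if_neg h1, if_neg (by omega)]

lemma kil_Jid_le (T : Set (Fin (n+1))) (s k : ℕ) (hsn : s < n+1)
    (hT : ∀ j ∈ T, (j : ℕ) < s) {u : Oamb n} (hu : u ∈ Jid n T s k) :
    kil (R := ℤ) (Sum.inr (⟨s, hsn⟩ : Fin (n+1))) u ∈ Jid n T (s+1) k := by
  set κ := kil (R := ℤ) (Sum.inr (⟨s, hsn⟩ : Fin (n+1))) with hκ
  have : Ideal.map (κ : Oamb n →+* Oamb n) (Jid n T s k) ≤ Jid n T (s+1) k := by
    rw [Jid, Ideal.map_span, Ideal.span_le]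
    rintro g ⟨g', hg', rfl⟩
    rcases hg' with ⟨j, hj, rfl⟩ | ⟨i, hi, rfl⟩
    · have : (κ : Oamb n →+* Oamb n) (zv j) = zv j := by
        have hj' : j ≠ ⟨s, hsn⟩ := by
          intro h; subst h; exact absurd (hT _ hj) (by simp)
        exact kil_zv_ne hsn hj'
      rw [this]
      exact Ideal.subset_span (zv_mem_gset hj)
    · have : (κ : Oamb n →+* Oamb n) (Ff s i) = Ff (s+1) i := kil_Ff hsn i
      rw [this]
      exact Ideal.subset_span (Ff_mem_gset hi)
  exact this (Ideal.mem_map_of_mem _ hu)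

-- the generators of `J(T,s,k)` do not involve row `r` when `k ≤ r`
lemma eqv_Ff_ne (r : Fin n) {i : Fin n} (h : i ≠ r) (s : ℕ) :
    eqv n r (Ff s i) = C (∑ j : Fin (n+1),
      if s ≤ (j : ℕ) then X (Sum.inl ⟨(i, j), h⟩) * X (Sum.inr j) else 0) := by
  rw [Ff, map_sum, map_sum]
  apply Finset.sum_congr rfl
  intro j _
  rw [apply_ite (eqv n r), map_zero, map_mul, eqv_av_ne r h, eqv_zv,
    apply_ite (C (σ := Fin (n+1))), map_zero, C_mul]

lemma gset_const (T : Set (Fin (n+1))) (s k : ℕ) (hkn : k < n) :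
    ∀ g ∈ gset n T s k, ∃ b, eqv n ⟨k, hkn⟩ g = C b := by
  rintro g (⟨j, hj, rfl⟩ | ⟨i, hi, rfl⟩)
  · exact ⟨_, eqv_zv _ j⟩
  · have hir : i ≠ ⟨k, hkn⟩ := by
      intro h; subst h; simp at hi
    exact ⟨_, eqv_Ff_ne _ hir s⟩

end Setup

section Master

variable {n : ℕ}

/-- statement A: regularity of the next generic form -/
def Ast (n k : ℕ) : Prop := ∀ (T : Set (Fin (n+1))) (s : ℕ), (∀ j ∈ T, (j : ℕ) < s) →
  ∀ (hkn : k < n), k + s ≤ n →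
  ∀ c : Oamb n, c * Ff s ⟨k, hkn⟩ ∈ Jid n T s k → c ∈ Jid n T s k

/-- statement B: the colon property with respect to all `z_j`, `j ≥ s` -/
def Bst (n k : ℕ) : Prop := ∀ (T : Set (Fin (n+1))) (s : ℕ), (∀ j ∈ T, (j : ℕ) < s) →
  k + s ≤ n →
  ∀ c : Oamb n, (∀ j : Fin (n+1), s ≤ (j : ℕ) → c * zv j ∈ Jid n T s k) → c ∈ Jid n T s k

/-- statement C: regularity of `z_s` -/
def Cst (n k : ℕ) : Prop := ∀ (T : Set (Fin (n+1))) (s : ℕ), (∀ j ∈ T, (j : ℕ) < s) →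
  ∀ (hsn : s < n+1), k + s ≤ n →
  ∀ c : Oamb n, c * zv ⟨s, hsn⟩ ∈ Jid n T s k → c ∈ Jid n T s k

lemma lemA (k : ℕ) (hB : Bst n k) : Ast n k := by
  intro T s hT hkn hks c hc
  exact transport_colon_step ⟨k, hkn⟩ s (gset n T s k)
    (gset_const T s k hkn) (hB T s hT hks) c hc

lemma lemB0 : Bst n 0 := by
  intro T s hT hks c hc
  have hsn : s < n + 1 := by omega
  apply var_colon (v := Sum.inr (⟨s, hsn⟩ : Fin (n+1)))
  · rintro g (⟨j, hj, rfl⟩ | ⟨i, hi, rfl⟩)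
    · exact kil_zv_ne hsn (by intro h; subst h; exact absurd (hT _ hj) (by simp))
    · exact absurd hi (by simp)
  · have := hc ⟨s, hsn⟩ (by simp)
    rw [zv] at this
    exact this

lemma lemC0 : Cst n 0 := by
  intro T s hT hsn hks c hc
  apply var_colon (v := Sum.inr (⟨s, hsn⟩ : Fin (n+1)))
  · rintro g (⟨j, hj, rfl⟩ | ⟨i, hi, rfl⟩)
    · exact kil_zv_ne hsn (by intro h; subst h; exact absurd (hT _ hj) (by simp))
    · exact absurd hi (by simp)
  · rw [zv] at hc
    exact hc

lemma lemCsucc (k : ℕ) (hA : Ast n k) (hC : Cst n k) : Cst n (k+1) := by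
  intro T s hT hsn hks c hc
  have hkn : k < n := by omega
  set f := Ff s (⟨k, hkn⟩ : Fin n) with hf
  rw [Jid_succ T s k hkn] at hc
  obtain ⟨u, hu, df, hdf, heq⟩ := Submodule.mem_sup.mp hc
  obtain ⟨g, hg⟩ := Ideal.mem_span_singleton'.mp hdf
  set κ := kil (R := ℤ) (Sum.inr (⟨s, hsn⟩ : Fin (n+1))) with hκ
  -- apply κ to the representation
  have hkeq : (0 : Oamb n) = κ u + κ g * Ff (s+1) ⟨k, hkn⟩ := by
    have h1 := congrArg κ heq
    rw [map_mul, kil_zv_self hsn, mul_zero] at h1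
    rw [← hg, map_add, map_mul] at h1
    rw [hκ] at h1 ⊢
    rw [kil_Ff hsn] at h1
    exact h1.symm
  have hκu : κ u ∈ Jid n T (s+1) k := kil_Jid_le T s k hsn hT hu
  have hκg : κ g * Ff (s+1) ⟨k, hkn⟩ ∈ Jid n T (s+1) k := by
    have : κ g * Ff (s+1) ⟨k, hkn⟩ = -κ u + 0 := by rw [hkeq]; ring
    rw [this]
    exact Submodule.add_mem _ (Submodule.neg_mem _ hκu) (Submodule.zero_mem _)
  have hκgJ : κ g ∈ Jid n T (s+1) k :=
    hA T (s+1) (fun j hj => by have := hT j hj; omega) hkn (by omega) (κ g) hκg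
  have hκgJ' : κ g ∈ Jid n T s k ⊔ Ideal.span {zv ⟨s, hsn⟩} :=
    Jid_shift_le T s k hsn hT hκgJ
  obtain ⟨u', hu', dz, hdz, heq'⟩ := Submodule.mem_sup.mp hκgJ'
  obtain ⟨h₁, hh₁⟩ := Ideal.mem_span_singleton'.mp hdz
  have hsub : g - κ g ∈ Ideal.span {zv ⟨s, hsn⟩} := by
    rw [hκ, zv]
    exact sub_kil_mem _ g
  obtain ⟨h₂, hh₂⟩ := Ideal.mem_span_singleton'.mp hsub
  -- g = u' + (h₁ + h₂) * z_s
  have hgrep : g = u' + (h₁ + h₂) * zv ⟨s, hsn⟩ := by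
    linear_combination -heq' - hh₁ - hh₂
  -- (c - (h₁+h₂) f) z_s ∈ J k
  have hmain : (c - (h₁ + h₂) * f) * zv ⟨s, hsn⟩ ∈ Jid n T s k := by
    have : (c - (h₁ + h₂) * f) * zv ⟨s, hsn⟩ = u + u' * f := by
      have h2 : c * zv ⟨s, hsn⟩ = u + g * f := by rw [← hg] at heq; exact heq.symm
      calc (c - (h₁ + h₂) * f) * zv ⟨s, hsn⟩
          = c * zv ⟨s, hsn⟩ - (h₁ + h₂) * zv ⟨s, hsn⟩ * f := by ring
        _ = u + g * f - (h₁ + h₂) * zv ⟨s, hsn⟩ * f := by rw [h2]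
        _ = u + u' * f := by rw [hgrep]; ring
    rw [this]
    exact Submodule.add_mem _ hu (Ideal.mul_mem_right _ _ hu')
  have := hC T s hT hsn (by omega) _ hmain
  rw [Jid_succ T s k hkn]
  have hcr : c = (c - (h₁ + h₂) * f) + (h₁ + h₂) * f := by ring
  rw [hcr]
  exact Submodule.add_mem _ (Ideal.mem_sup_left this)
    (Ideal.mem_sup_right (Ideal.mul_mem_left _ _ (Ideal.subset_span rfl)))

lemma lemBsucc (k : ℕ) (hA : Ast n k) (hB : Bst n k) (hC : Cst n k) : Bst n (k+1) := by
  intro T s hT hks c hc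
  have hkn : k < n := by omega
  have hsn : s < n + 1 := by omega
  have hsn1 : s + 1 < n + 1 := by omega
  set f := Ff s (⟨k, hkn⟩ : Fin n) with hf
  set J := Jid n T s k with hJ
  -- choose the d_j
  have hd' : ∀ j : Fin (n+1), ∃ d, s ≤ (j : ℕ) → c * zv j - d * f ∈ J := by
    intro j
    by_cases hj : s ≤ (j : ℕ)
    · have := hc j hj
      rw [Jid_succ T s k hkn] at this
      obtain ⟨u, hu, df, hdf, heq⟩ := Submodule.mem_sup.mp this
      obtain ⟨d, hdeq⟩ := Ideal.mem_span_singleton'.mp hdf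
      refine ⟨d, fun _ => ?_⟩
      have : c * zv j - d * f = u := by rw [← hdeq] at heq; rw [← heq]; ring
      rw [this]; exact hu
    · exact ⟨0, fun h => absurd h hj⟩
  choose d hd using hd'
  -- the Koszul syzygies
  have syz : ∀ l j : Fin (n+1), s ≤ (l : ℕ) → s ≤ (j : ℕ) →
      zv l * d j - zv j * d l ∈ J := by
    intro l j hl hj
    have h1 : zv l * (c * zv j - d j * f) - zv j * (c * zv l - d l * f)
        = (zv j * d l - zv l * d j) * f := by ring
    have h2 : (zv j * d l - zv l * d j) * f ∈ J := by
      rw [← h1]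
      exact Submodule.sub_mem _ (Ideal.mul_mem_left _ _ (hd j hj))
        (Ideal.mul_mem_left _ _ (hd l hl))
    have h3 := hA T s hT hkn (by omega) _ h2
    have : zv l * d j - zv j * d l = -(zv j * d l - zv l * d j) := by ring
    rw [this]
    exact Submodule.neg_mem _ h3
  set jS : Fin (n+1) := ⟨s, hsn⟩ with hjS
  set jS1 : Fin (n+1) := ⟨s+1, hsn1⟩ with hjS1
  -- d jS ∈ J ⊔ (z_s)
  have hdS : d jS ∈ J ⊔ Ideal.span {zv jS} := by
    have h1 : d jS * zv jS1 ∈ J ⊔ Ideal.span {zv jS} := by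
      have h2 := syz jS1 jS (by simp [hjS1]) (by simp [hjS])
      have : d jS * zv jS1 = (zv jS1 * d jS - zv jS * d jS1) + zv jS * d jS1 := by ring
      rw [this]
      refine Submodule.add_mem _ (Ideal.mem_sup_left h2) (Ideal.mem_sup_right ?_)
      rw [Ideal.mem_span_singleton']
      exact ⟨d jS1, by ring⟩
    rw [Jid_insert T s k hsn hT] at h1 ⊢
    exact hC (insert jS T) (s+1)
      (by rintro j hj; rcases Set.mem_insert_iff.mp hj with rfl | hj'
          · simp [hjS]
          · have := hT j hj'; omega)
      hsn1 (by omega) _ h1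
  obtain ⟨u₂, hu₂, dz, hdz, hdSrep⟩ := Submodule.mem_sup.mp hdS
  obtain ⟨e₀, he₀⟩ := Ideal.mem_span_singleton'.mp hdz
  -- all the d j are congruent to z_j e₀ mod J
  have hdj : ∀ j : Fin (n+1), s ≤ (j : ℕ) → d j - zv j * e₀ ∈ J := by
    intro j hj
    have h1 := syz jS j (by simp [hjS]) hj
    have h2 : (d j - zv j * e₀) * zv jS
        = (zv jS * d j - zv j * d jS) + zv j * u₂ := by
      have : d jS = u₂ + e₀ * zv jS := by rw [← hdSrep, ← he₀]
      rw [this]; ring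
    have h3 : (d j - zv j * e₀) * zv jS ∈ J := by
      rw [h2]
      exact Submodule.add_mem _ h1 (Ideal.mul_mem_left _ _ hu₂)
    exact hC T s hT hsn (by omega) _ h3
  -- conclude
  have hfinal : ∀ j : Fin (n+1), s ≤ (j : ℕ) → (c - e₀ * f) * zv j ∈ J := by
    intro j hj
    have : (c - e₀ * f) * zv j = (c * zv j - d j * f) + (d j - zv j * e₀) * f := by ring
    rw [this]
    exact Submodule.add_mem _ (hd j hj) (Ideal.mul_mem_right _ _ (hdj j hj))
  have := hB T s hT (by omega) _ hfinal
  rw [Jid_succ T s k hkn]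
  have hcr : c = (c - e₀ * f) + e₀ * f := by ring
  rw [hcr]
  exact Submodule.add_mem _ (Ideal.mem_sup_left this)
    (Ideal.mem_sup_right (Ideal.mul_mem_left _ _ (Ideal.subset_span rfl)))

theorem master (n : ℕ) : ∀ k, Bst n k ∧ Cst n k ∧ Ast n k := by
  intro k
  induction k with
  | zero => exact ⟨lemB0, lemC0, lemA 0 lemB0⟩
  | succ k IH =>
    obtain ⟨hB, hC, hA⟩ := IH
    have hBs : Bst n (k+1) := lemBsucc k hA hB hC
    exact ⟨hBs, lemCsucc k hA hC, lemA (k+1) hBs⟩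

end Master

section Glue

lemma Ff_zero_eq_fv {n : ℕ} (i : Fin n) : Ff 0 i = fv i := by
  rw [Ff, fv]
  apply Finset.sum_congr rfl
  intro j _
  rw [if_pos (Nat.zero_le _)]

lemma smul_reg_of_colon {R : Type*} [CommRing R] (I : Ideal R) (r : R)
    (h : ∀ c, c * r ∈ I → c ∈ I) :
    IsSMulRegular (R ⧸ (I • ⊤ : Submodule R R)) r := by
  have hI : (I • ⊤ : Submodule R R) = I := by
    rw [Ideal.smul_eq_mul, Ideal.mul_top]
  intro x y hxy
  obtain ⟨cx, rfl⟩ := Submodule.Quotient.mk_surjective _ x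
  obtain ⟨cy, rfl⟩ := Submodule.Quotient.mk_surjective _ y
  simp only [← Submodule.Quotient.mk_smul] at hxy
  rw [Submodule.Quotient.eq, hI] at hxy
  rw [Submodule.Quotient.eq, hI]
  have : (cx - cy) * r ∈ I := by
    have : r • cx - r • cy = (cx - cy) * r := by
      simp only [smul_eq_mul]; ring
    rw [← this]; exact hxy
  exact h _ this

lemma ofList_take_eq_Jid (n : ℕ) (i : ℕ) (hi : i ≤ n) :
    Ideal.ofList ((List.ofFn (fun i : Fin n => fv i)).take i) = Jid n ∅ 0 i := by
  have hset : {r | r ∈ (List.ofFn (fun i : Fin n => fv i)).take i} = gset n ∅ 0 i := by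
    rw [gset]
    ext r
    simp only [Set.mem_setOf_eq, Set.image_empty, Set.empty_union, Set.mem_image,
      Set.mem_setOf_eq]
    rw [List.mem_iff_getElem]
    constructor
    · rintro ⟨m, hm, rfl⟩
      have hm' : m < i := by
        have := hm
        simp only [List.length_take, List.length_ofFn] at this
        omega
      have hmn : m < n := by omega
      refine ⟨⟨m, hmn⟩, hm', ?_⟩
      rw [List.getElem_take, List.getElem_ofFn]
      exact Ff_zero_eq_fv _
    · rintro ⟨i', hi', rfl⟩
      refine ⟨(i' : ℕ), ?_, ?_⟩
      · simp only [List.length_take, List.length_ofFn]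
        omega
      · rw [List.getElem_take, List.getElem_ofFn, ← Ff_zero_eq_fv, Fin.eta]
  rw [Jid, ← hset]

theorem generic_forms_isRegular' (n : ℕ) :
    RingTheory.Sequence.IsRegular (Oamb n) (List.ofFn (fun i : Fin n => fv i)) := by
  refine ⟨⟨?_⟩, ?_⟩
  · intro i hlen
    have hin : i < n := by simpa using hlen
    have hJ := ofList_take_eq_Jid n i (le_of_lt hin)
    rw [hJ]
    have hget : (List.ofFn (fun i : Fin n => fv i))[i] = fv ⟨i, hin⟩ := by
      rw [List.getElem_ofFn]
    rw [hget]
    apply smul_reg_of_colon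
    intro c hc
    have hA := (master n i).2.2
    have := hA ∅ 0 (by simp) hin (by omega) c
    rw [Ff_zero_eq_fv] at this
    exact this hc
  · -- nontriviality
    intro htop
    have hJ := ofList_take_eq_Jid n n le_rfl
    rw [List.take_of_length_le (by simp)] at hJ
    have h1 : (1 : Oamb n) ∈ Ideal.ofList (List.ofFn (fun i : Fin n => fv i)) := by
      have : (1 : Oamb n) ∈ (⊤ : Submodule (Oamb n) (Oamb n)) := trivial
      rw [htop] at this
      rwa [Ideal.smul_eq_mul, Ideal.mul_top] at this
    rw [hJ] at h1
    -- evaluate: constant coefficient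
    have hker : Jid n ∅ 0 n ≤ RingHom.ker (constantCoeff (R := ℤ)) := by
      rw [Jid, Ideal.span_le]
      rintro g (⟨j, hj, rfl⟩ | ⟨i, _, rfl⟩)
      · exact absurd hj (Set.notMem_empty _)
      · rw [SetLike.mem_coe, RingHom.mem_ker, Ff, map_sum]
        apply Finset.sum_eq_zero
        intro j _
        rw [apply_ite (constantCoeff (R := ℤ)), map_zero, map_mul, av, zv,
          constantCoeff_X, zero_mul, ite_self]
    have := hker h1
    rw [RingHom.mem_ker, map_one] at this
    exact one_ne_zero this

end Glue
/-- The generic linear forms `f_1, …, f_n` form a regular sequence in `O_amb`. -/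
theorem generic_forms_isRegular (n : ℕ) (hn : 1 ≤ n) :
    RingTheory.Sequence.IsRegular (Oamb n) (List.ofFn (fun i : Fin n => fv i)) := by
  exact generic_forms_isRegular' n
end

section
/- Fix n ≥ 1. The quotient ring O_X = O_amb/(f_1, ..., f_n), where O_amb = ℤ[a_{ij}, z_j] and f_i = Σ_{j=1}^{n+1} a_{ij} z_j, is an integral domain. -/
open MvPolynomial

set_option linter.unusedSectionVars false
set_option linter.unusedVariables false
set_option maxHeartbeats 1600000
set_option synthInstance.maxHeartbeats 400000

section Prim
variable {R : Type} [CommRing R] [IsDomain R] {σ : Type}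

/-- The span of a set of variables in a polynomial ring over a domain is prime. -/
theorem prim_sub (s : Set σ) [DecidablePred (· ∈ s)] (F : MvPolynomial σ R) :
    F - aeval (fun i => if i ∈ s then 0 else X i) F ∈
      Ideal.span ((fun i => (X i : MvPolynomial σ R)) '' s) := by
  induction F using MvPolynomial.induction_on with
  | C a => simp
  | add F G hF hG => rw [map_add]; convert Ideal.add_mem _ hF hG using 1; ring
  | mul_X F i hF =>
      rw [map_mul, aeval_X]
      by_cases h : i ∈ s
      · rw [if_pos h]
        have hXi : (X i : MvPolynomial σ R) ∈ Ideal.span ((fun i => (X i : MvPolynomial σ R)) '' s) :=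
          Ideal.subset_span ⟨i, h, rfl⟩
        simpa using Ideal.mul_mem_left _ F hXi
      · rw [if_neg h]
        have : F * X i - (aeval (fun i => if i ∈ s then 0 else X i)) F * X i
            = (F - aeval (fun i => if i ∈ s then 0 else X i) F) * X i := by ring
        rw [this]
        exact Ideal.mul_mem_right _ _ hF

theorem prim_ker (s : Set σ) [DecidablePred (· ∈ s)] :
    RingHom.ker ((aeval (R := R) (fun i => if i ∈ s then 0 else X i)).toRingHom :
      MvPolynomial σ R →+* MvPolynomial σ R)
      = Ideal.span ((fun i => (X i : MvPolynomial σ R)) '' s) := by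
  apply le_antisymm
  · intro F hF
    have h0 : aeval (fun i => if i ∈ s then 0 else X i) F = 0 := hF
    have := prim_sub (R := R) s F
    rwa [h0, sub_zero] at this
  · rw [Ideal.span_le]
    rintro x ⟨i, hi, rfl⟩
    simp [RingHom.mem_ker, hi]

theorem prim (s : Set σ) :
    (Ideal.span ((fun i => (X i : MvPolynomial σ R)) '' s)).IsPrime := by
  classical
  rw [← prim_ker s]
  exact RingHom.ker_isPrime _

theorem prim_not_mem {s : Set σ} {a : σ} (ha : a ∉ s) :
    (X a : MvPolynomial σ R) ∉ Ideal.span ((fun i => (X i : MvPolynomial σ R)) '' s) := by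
  classical
  rw [← prim_ker s]
  intro h
  have : (if a ∈ s then (0 : MvPolynomial σ R) else X a) = 0 := by simpa [RingHom.mem_ker] using h
  rw [if_neg ha] at this
  exact X_ne_zero a this

end Prim

section Core
variable {B : Type} [CommRing B] [IsDomain B] {ι : Type} [Fintype ι] [DecidableEq ι]

theorem prime_X_mv {σ : Type} (a : σ) : Prime (X a : MvPolynomial σ B) := by
  have h := prim (R := B) (σ := σ) {a}
  rw [Set.image_singleton] at h
  rw [← Ideal.span_singleton_prime (X_ne_zero a)]
  exact h

theorem mu_monomial (r : B) (s : ι →₀ ℕ) (b : B) :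
    aeval (fun j => C r * X j) (monomial s b) = C (r ^ (s.sum fun _ e => e)) * monomial s b := by
  rw [aeval_monomial]
  have h1 : (s.prod fun i k => (C r * X i : MvPolynomial ι B) ^ k)
      = (s.prod fun i k => (C (r ^ k) : MvPolynomial ι B)) * s.prod fun i k => (X i : MvPolynomial ι B) ^ k := by
    rw [← Finsupp.prod_mul]
    apply Finsupp.prod_congr
    intro i _
    rw [mul_pow, map_pow]
  have h2 : (s.prod fun i k => (C (r ^ k) : MvPolynomial ι B)) = C (r ^ (s.sum fun _ e => e)) := by
    rw [Finsupp.prod, Finsupp.sum, ← map_prod, Finset.prod_pow_eq_pow_sum]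
  rw [h1, h2, monomial_eq, algebraMap_eq]
  ring

theorem mu_of_homog {r : B} {F : MvPolynomial ι B} {d : ℕ} (h : F.IsHomogeneous d) :
    aeval (fun j => C r * X j) F = C (r ^ d) * F := by
  conv_lhs => rw [F.as_sum]
  rw [map_sum]
  conv_rhs => rw [F.as_sum, Finset.mul_sum]
  apply Finset.sum_congr rfl
  intro v hv
  rw [mu_monomial]
  congr 2
  have := h (mem_support_iff.mp hv)
  rw [← this]
  simp [Finsupp.weight, Finsupp.sum, Finsupp.linearCombination, Finsupp.degree]

theorem hp_homog (c : ι → B) : (∑ j, C (c j) * X j : MvPolynomial ι B).IsHomogeneous 1 := by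
  apply IsHomogeneous.sum
  intro j _
  have := (isHomogeneous_C ι (c j)).mul (isHomogeneous_X B j)
  simpa using this

theorem comp_mul_mem {p : MvPolynomial ι B} (hp : p.IsHomogeneous 1) (H : MvPolynomial ι B) (d : ℕ) :
    homogeneousComponent d (p * H) ∈ Ideal.span {p} := by
  induction H using MvPolynomial.induction_on' with
  | monomial s b =>
      have hm : (p * monomial s b).IsHomogeneous (1 + s.degree) :=
        hp.mul (isHomogeneous_monomial b rfl)
      rw [homogeneousComponent_of_mem ((mem_homogeneousSubmodule _ _).mpr hm)]
      split
      · exact Ideal.mul_mem_right _ _ (Ideal.subset_span rfl)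
      · exact Ideal.zero_mem _
  | add F G hF hG =>
      rw [mul_add, map_add]
      exact Ideal.add_mem _ hF hG

theorem sat_pow {p : MvPolynomial ι B} {c0 : B} (hC0 : Prime (C c0 : MvPolynomial ι B))
    (hndvd : ¬ (C c0 : MvPolynomial ι B) ∣ p) (N : ℕ) (G : MvPolynomial ι B)
    (h : p ∣ (C c0) ^ N * G) : p ∣ G := by
  induction N generalizing G with
  | zero => simpa using h
  | succ N ih =>
      obtain ⟨H, hH⟩ := h
      have hdvd : (C c0 : MvPolynomial ι B) ∣ p * H := by
        rw [← hH, pow_succ]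
        exact ⟨C c0 ^ N * G, by ring⟩
      rcases hC0.dvd_mul.mp hdvd with h' | h'
      · exact absurd h' hndvd
      · obtain ⟨H1, hH1⟩ := h'
        apply ih
        refine ⟨H1, ?_⟩
        have : C c0 * ((C c0) ^ N * G) = C c0 * (p * H1) := by
          rw [← mul_assoc, mul_comm (C c0) ((C c0)^N), ← pow_succ, hH, hH1]; ring
        exact mul_left_cancel₀ hC0.ne_zero this

theorem core (c : ι → B) (j0 j1 : ι) (hne : j0 ≠ j1) (h0 : Prime (c j0))
    (h1 : c j1 ∉ Ideal.span {c j0}) :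
    (Ideal.span {∑ j, C (c j) * X j} : Ideal (MvPolynomial ι B)).IsPrime := by
  set p : MvPolynomial ι B := ∑ j, C (c j) * X j with hp_def
  have hC0 : Prime (C (c j0) : MvPolynomial ι B) := (prime_C_iff _).mpr h0
  -- p is not divisible by C (c j0)
  have hcoeff : coeff (Finsupp.single j1 1) p = c j1 := by
    rw [hp_def, coeff_sum]
    rw [Finset.sum_eq_single j1]
    · rw [coeff_C_mul, coeff_X', if_pos rfl]; ring
    · intro j _ hj
      rw [coeff_C_mul, coeff_X', if_neg, mul_zero]
      intro hs
      exact hj (Finsupp.single_left_injective one_ne_zero hs)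
    · intro h; exact absurd (Finset.mem_univ j1) h
  have hndvd : ¬ (C (c j0) : MvPolynomial ι B) ∣ p := by
    rintro ⟨q, hq⟩
    apply h1
    rw [Ideal.mem_span_singleton]
    refine ⟨coeff (Finsupp.single j1 1) q, ?_⟩
    rw [← hcoeff, hq, coeff_C_mul]
  -- homogeneity
  have hp1 : p.IsHomogeneous 1 := hp_homog c
  -- the substitutions
  set S : MvPolynomial ι B := ∑ j' ∈ Finset.univ.erase j0, C (c j') * X j' with hS_def
  have hsplit : p = C (c j0) * X j0 + S := by
    rw [hp_def, hS_def, ← Finset.add_sum_erase _ _ (Finset.mem_univ j0)]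
  set f : ι → MvPolynomial ι B :=
    fun j => if j = j0 then C (c j0) * X j0 - S else C (c j0) * X j with hf_def
  set g : ι → MvPolynomial ι B := fun j => if j = j0 then p else C (c j0) * X j with hg_def
  have haevalS : ∀ (h : ι → MvPolynomial ι B), aeval h S = ∑ j' ∈ Finset.univ.erase j0, C (c j') * h j' := by
    intro h
    rw [hS_def, map_sum]
    apply Finset.sum_congr rfl
    intro j _
    rw [map_mul, aeval_C, algebraMap_eq, aeval_X]
  have hφp : aeval f p = C (c j0) ^ 2 * X j0 := by
    rw [hsplit, map_add, map_mul, aeval_C, algebraMap_eq, aeval_X, haevalS]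
    have : ∑ j' ∈ Finset.univ.erase j0, C (c j') * f j'
        = C (c j0) * S := by
      rw [hS_def, Finset.mul_sum]
      apply Finset.sum_congr rfl
      intro j hj
      rw [hf_def]
      simp only
      rw [if_neg (Finset.ne_of_mem_erase hj)]
      ring
    rw [this, hf_def]
    simp only [eq_self_iff_true, if_true]
    ring
  have hgf : ∀ j, aeval g (f j) = C (c j0 ^ 2) * X j := by
    have hC2 : (C (c j0 ^ 2) : MvPolynomial ι B) = C (c j0) * C (c j0) := by
      rw [pow_two, map_mul]
    intro j
    by_cases hj : j = j0
    · rw [hj, hf_def]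
      simp only [eq_self_iff_true, if_true]
      rw [map_sub, map_mul, aeval_C, algebraMap_eq, aeval_X, haevalS]
      have h2 : ∑ j' ∈ Finset.univ.erase j0, C (c j') * g j' = C (c j0) * S := by
        rw [hS_def, Finset.mul_sum]
        apply Finset.sum_congr rfl
        intro j' hj'
        rw [hg_def]
        simp only
        rw [if_neg (Finset.ne_of_mem_erase hj')]
        ring
      rw [h2, hg_def]
      simp only [eq_self_iff_true, if_true]
      rw [hsplit, hC2]
      ring
    · rw [hf_def]
      simp only [if_neg hj]
      rw [map_mul, aeval_C, algebraMap_eq, aeval_X, hg_def]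
      simp only [if_neg hj]
      rw [hC2]
      ring
  have hcomp : ∀ F : MvPolynomial ι B, aeval g (aeval f F) = aeval (fun j => C (c j0 ^ 2) * X j) F := by
    intro F
    have : (aeval g).comp (aeval f) = (aeval (R := B) (fun j => C (c j0 ^ 2) * X j)) := by
      apply MvPolynomial.algHom_ext
      intro j
      rw [AlgHom.comp_apply, aeval_X, hgf, aeval_X]
    calc aeval g (aeval f F) = ((aeval g).comp (aeval f)) F := rfl
      _ = _ := by rw [this]
  -- the saturation/component argument
  have key : ∀ F : MvPolynomial ι B, (X j0 : MvPolynomial ι B) ∣ aeval f F → p ∣ F := by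
    intro F hdvd
    obtain ⟨F1, hF1⟩ := hdvd
    have hmu : aeval (fun j => C (c j0 ^ 2) * X j) F = p * aeval g F1 := by
      rw [← hcomp, hF1, map_mul, aeval_X, hg_def]
      simp only [eq_self_iff_true, if_true]
    -- decompose F into homogeneous components
    rw [← Ideal.mem_span_singleton]
    have hF_eq : F = ∑ d ∈ Finset.range (F.totalDegree + 1), homogeneousComponent d F :=
      (sum_homogeneousComponent F).symm
    rw [hF_eq]
    apply Ideal.sum_mem
    intro d _
    -- compute homogeneousComponent d of both sides of hmu
    have hLHS : homogeneousComponent d (aeval (fun j => C (c j0 ^ 2) * X j) F)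
        = C ((c j0 ^ 2) ^ d) * homogeneousComponent d F := by
      conv_lhs => rw [hF_eq, map_sum, map_sum]
      have : ∀ e ∈ Finset.range (F.totalDegree + 1),
          homogeneousComponent d (aeval (fun j => C (c j0 ^ 2) * X j) (homogeneousComponent e F))
          = if d = e then C ((c j0 ^ 2) ^ e) * homogeneousComponent e F else 0 := by
        intro e _
        rw [mu_of_homog (homogeneousComponent_isHomogeneous e F), homogeneousComponent_C_mul,
          homogeneousComponent_of_mem (homogeneousComponent_mem e F)]
        split <;> simp
      rw [Finset.sum_congr rfl this, Finset.sum_ite_eq]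
      split
      · rfl
      · rename_i hd
        rw [homogeneousComponent_eq_zero, mul_zero]
        simp only [Finset.mem_range] at hd
        omega
    have hmem := comp_mul_mem hp1 (aeval g F1) d
    rw [← hmu, hLHS] at hmem
    rw [Ideal.mem_span_singleton]
    apply sat_pow hC0 hndvd (2 * d)
    rw [← Ideal.mem_span_singleton]
    have hpow : (C (c j0) : MvPolynomial ι B) ^ (2 * d) = C ((c j0 ^ 2) ^ d) := by
      rw [← map_pow, ← pow_mul, mul_comm 2 d]
    rw [hpow]
    exact hmem
  constructor
  · intro htop
    rw [Ideal.eq_top_iff_one, Ideal.mem_span_singleton] at htop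
    have : IsUnit p := isUnit_of_dvd_one htop
    have h2 : IsUnit (C (c j0) ^ 2 * (X j0 : MvPolynomial ι B)) := by
      rw [← hφp]; exact this.map (aeval f)
    exact (prime_X_mv j0).not_unit (isUnit_of_mul_isUnit_right h2)
  · intro F G hFG
    rw [Ideal.mem_span_singleton] at hFG
    obtain ⟨H, hH⟩ := hFG
    have hX : (X j0 : MvPolynomial ι B) ∣ aeval f F * aeval f G := by
      refine ⟨C (c j0) ^ 2 * aeval f H, ?_⟩
      rw [← map_mul, hH, map_mul, hφp]; ring
    rcases (prime_X_mv j0).dvd_mul.mp hX with h' | h'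
    · left; rw [Ideal.mem_span_singleton]; exact key F h'
    · right; rw [Ideal.mem_span_singleton]; exact key G h'

end Core

section Good
variable {ι : Type}

def GOOD {ι : Type} : (k : ℕ) → (C : Type) → [inst : CommRing C] → (ι → C) → Prop
  | 0, C, _, _ => IsDomain C
  | (k+1), C, _, c => IsDomain C ∧ ∃ j0 j1 : ι, j0 ≠ j1 ∧ Prime (c j0) ∧
      c j1 ∉ Ideal.span {c j0} ∧
      GOOD k (C ⧸ Ideal.span {c j0}) (fun j => Ideal.Quotient.mk _ (c j))

theorem GOOD_zero {C : Type} [CommRing C] {c : ι → C} : GOOD 0 C c ↔ IsDomain C := Iff.rfl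

theorem GOOD_succ {k : ℕ} {C : Type} [CommRing C] {c : ι → C} :
    GOOD (k+1) C c ↔ IsDomain C ∧ ∃ j0 j1 : ι, j0 ≠ j1 ∧ Prime (c j0) ∧
      c j1 ∉ Ideal.span {c j0} ∧
      GOOD k (C ⧸ Ideal.span {c j0}) (fun j => Ideal.Quotient.mk _ (c j)) := Iff.rfl

theorem GOOD_domain {k : ℕ} {C : Type} [CommRing C] {c : ι → C} (h : GOOD k C c) :
    IsDomain C := by
  cases k with
  | zero => exact h
  | succ k => exact h.1

theorem GOOD_mono : ∀ (k : ℕ) (C : Type) [CommRing C] (c : ι → C),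
    GOOD (k+1) C c → GOOD k C c := by
  intro k
  induction k with
  | zero => intro C _ c h; exact h.1
  | succ k ih =>
      intro C _ c h
      obtain ⟨hD, j0, j1, hne, hp, hnm, hrec⟩ := h
      exact ⟨hD, j0, j1, hne, hp, hnm, ih _ _ hrec⟩

theorem GOOD_congr : ∀ (k : ℕ) (C C' : Type) [CommRing C] [CommRing C'] (c : ι → C)
    (c' : ι → C') (e : C ≃+* C') (hc : ∀ j, e (c j) = c' j), GOOD k C c → GOOD k C' c' := by
  intro k
  induction k with
  | zero =>
      intro C C' _ _ c c' e hc h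
      rw [GOOD_zero] at h ⊢
      exact Function.Injective.isDomain e.symm.toRingHom e.symm.injective
  | succ k ih =>
      intro C C' _ _ c c' e hc h
      obtain ⟨hD, j0, j1, hne, hp, hnm, hrec⟩ := h
      refine ⟨Function.Injective.isDomain e.symm.toRingHom e.symm.injective,
        j0, j1, hne, ?_, ?_, ?_⟩
      · rw [← hc j0]
        exact ((MulEquiv.prime_iff e).mpr hp)
      · intro hmem
        apply hnm
        have hspan : Ideal.span {c' j0} = Ideal.map (e : C →+* C') (Ideal.span {c j0}) := by
          rw [Ideal.map_span, Set.image_singleton]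
          simp only [RingHom.coe_coe]
          rw [hc j0]
        rw [hspan] at hmem
        obtain ⟨y, hy, hey⟩ :=
          (Ideal.mem_map_iff_of_surjective (e : C →+* C') e.surjective).mp hmem
        have : y = c j1 := by
          apply e.injective
          rw [hc j1, ← hey]
          rfl
        rwa [← this]
      · have hspan : Ideal.span {c' j0} = Ideal.map (e : C →+* C') (Ideal.span {c j0}) := by
          rw [Ideal.map_span, Set.image_singleton]
          simp only [RingHom.coe_coe]
          rw [hc j0]
        refine ih _ _ _ _ (Ideal.quotientEquiv _ _ e hspan) (fun j => ?_) hrec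
        rw [Ideal.quotientEquiv_mk, hc j]
end Good

section GoodX
variable {R : Type} [CommRing R] [IsDomain R]

/-- the set of the first `d` variables -/
def sD (n d : ℕ) : Set (Fin (n+1)) := {i | (i : ℕ) < d}

theorem sD_succ (n d : ℕ) (hd : d < n + 1) :
    sD n (d+1) = sD n d ∪ {(⟨d, hd⟩ : Fin (n+1))} := by
  ext i
  simp only [sD, Set.mem_setOf_eq, Set.mem_union, Set.mem_singleton_iff, Fin.ext_iff]
  omega

theorem goodX (n : ℕ) : ∀ (k d : ℕ), k + d ≤ n →
    GOOD k (MvPolynomial (Fin (n+1)) R ⧸ Ideal.span ((fun i => (X i : MvPolynomial (Fin (n+1)) R)) '' sD n d))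
      (fun j => Ideal.Quotient.mk _ (X j)) := by
  intro k
  induction k with
  | zero =>
      intro d hd
      exact (Ideal.Quotient.isDomain_iff_prime _).mpr (prim _)
  | succ k ih =>
      intro d hd
      set I : Ideal (MvPolynomial (Fin (n+1)) R) :=
        Ideal.span ((fun i => (X i : MvPolynomial (Fin (n+1)) R)) '' sD n d) with hI
      set mkI := Ideal.Quotient.mk I with hmkI
      have hdn : d < n + 1 := by omega
      have hdn1 : d + 1 < n + 1 := by omega
      set j0 : Fin (n+1) := ⟨d, hdn⟩ with hj0
      set j1 : Fin (n+1) := ⟨d+1, hdn1⟩ with hj1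
      have hj0n : j0 ∉ sD n d := by simp [sD, hj0]
      have hj1n : j1 ∉ sD n (d+1) := by simp [sD, hj1]
      have hIsup : I ⊔ Ideal.span {X j0} =
          Ideal.span ((fun i => (X i : MvPolynomial (Fin (n+1)) R)) '' sD n (d+1)) := by
        rw [hI, ← Ideal.span_union, sD_succ n d hdn, Set.image_union, Set.image_singleton]
      -- the equivalence (R_d ⧸ (X j0)) ≃ R_{d+1}
      have hspan : Ideal.span {mkI (X j0)} = Ideal.map mkI (Ideal.span {X j0}) := by
        rw [Ideal.map_span, Set.image_singleton]
      let E1 : (MvPolynomial (Fin (n+1)) R ⧸ I) ⧸ Ideal.span {mkI (X j0)} ≃+*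
          (MvPolynomial (Fin (n+1)) R ⧸ I) ⧸ Ideal.map mkI (Ideal.span {X j0}) :=
        Ideal.quotEquivOfEq (by rw [hspan])
      let E2 := DoubleQuot.quotQuotEquivQuotSup I (Ideal.span {X j0})
      let E3 : MvPolynomial (Fin (n+1)) R ⧸ (I ⊔ Ideal.span {X j0}) ≃+*
          MvPolynomial (Fin (n+1)) R ⧸
            Ideal.span ((fun i => (X i : MvPolynomial (Fin (n+1)) R)) '' sD n (d+1)) :=
        Ideal.quotEquivOfEq hIsup
      let E := (E1.trans E2).trans E3
      have hE : ∀ x : MvPolynomial (Fin (n+1)) R,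
          E (Ideal.Quotient.mk _ (mkI x)) = Ideal.Quotient.mk _ x := by
        intro x
        simp only [E, E1, E2, E3, RingEquiv.trans_apply]
        rw [Ideal.quotEquivOfEq_mk]
        have h2 : (Ideal.Quotient.mk (Ideal.map mkI (Ideal.span {X j0}))) (mkI x)
            = DoubleQuot.quotQuotMk I (Ideal.span {X j0}) x := rfl
        rw [h2, DoubleQuot.quotQuotEquivQuotSup_quotQuotMk, Ideal.quotEquivOfEq_mk]
      -- domain of R_{d+1} transported
      have hDom1 : IsDomain (MvPolynomial (Fin (n+1)) R ⧸
          Ideal.span ((fun i => (X i : MvPolynomial (Fin (n+1)) R)) '' sD n (d+1))) :=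
        (Ideal.Quotient.isDomain_iff_prime _).mpr (prim _)
      have hDomQ : IsDomain ((MvPolynomial (Fin (n+1)) R ⧸ I) ⧸ Ideal.span {mkI (X j0)}) :=
        Function.Injective.isDomain E.toRingHom E.injective
      have hne0 : mkI (X j0) ≠ 0 := by
        rw [hmkI, Ne, Ideal.Quotient.eq_zero_iff_mem]
        exact prim_not_mem hj0n
      refine ⟨(Ideal.Quotient.isDomain_iff_prime _).mpr (prim _), j0, j1, ?_, ?_, ?_, ?_⟩
      · simp [hj0, hj1, Fin.ext_iff]
      · rw [← Ideal.span_singleton_prime hne0]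
        exact (Ideal.Quotient.isDomain_iff_prime _).mp hDomQ
      · intro hmem
        rw [hspan] at hmem
        obtain ⟨y, hy, hey⟩ :=
          (Ideal.mem_map_iff_of_surjective mkI Ideal.Quotient.mk_surjective).mp hmem
        have hsub : X j1 - y ∈ I := by
          rw [← Ideal.Quotient.eq]
          exact hey.symm
        have : (X j1 : MvPolynomial (Fin (n+1)) R) ∈ I ⊔ Ideal.span {X j0} := by
          have : (X j1 : MvPolynomial (Fin (n+1)) R) = (X j1 - y) + y := by ring
          rw [this]
          exact Submodule.add_mem _ (Ideal.mem_sup_left hsub) (Ideal.mem_sup_right hy)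
        rw [hIsup] at this
        exact prim_not_mem hj1n this
      · refine GOOD_congr k _ _ (fun j => Ideal.Quotient.mk _ (X j))
          (fun j => Ideal.Quotient.mk _ (mkI (X j))) E.symm (fun j => ?_)
          (ih (d+1) (by omega))
        show E.symm (Ideal.Quotient.mk _ (X j)) = _
        rw [← hE (X j), RingEquiv.symm_apply_apply]

end GoodX

section Tower
variable {ι : Type} [Fintype ι] [DecidableEq ι]

noncomputable def gens (k : ℕ) {A : Type} [CommRing A] (c : ι → A) :
    Fin k → MvPolynomial (Fin k × ι) A :=
  fun i => ∑ j, C (c j) * X (i, j)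

def vEquiv (ι : Type) (k : ℕ) : Fin (k+1) × ι ≃ ι ⊕ (Fin k × ι) where
  toFun x := Fin.lastCases (motive := fun _ => ι ⊕ (Fin k × ι))
    (Sum.inl x.2) (fun i' => Sum.inr (i', x.2)) x.1
  invFun y := Sum.elim (fun j => (Fin.last k, j)) (fun z => (z.1.castSucc, z.2)) y
  left_inv := by
    rintro ⟨i, j⟩
    induction i using Fin.lastCases with
    | last => simp
    | cast i' => simp
  right_inv := by
    rintro (j | ⟨i, j⟩)
    · simp
    · simp

theorem vEquiv_cast (k : ℕ) (i' : Fin k) (j : ι) :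
    vEquiv ι k (Fin.castSucc i', j) = Sum.inr (i', j) := by
  simp [vEquiv]

theorem vEquiv_last (k : ℕ) (j : ι) :
    vEquiv ι k (Fin.last k, j) = Sum.inl j := by
  simp [vEquiv]

theorem constantCoeff_gens (k : ℕ) {A : Type} [CommRing A] (c : ι → A) (i : Fin k) :
    constantCoeff (gens k c i) = 0 := by
  rw [gens, map_sum]
  apply Finset.sum_eq_zero
  intro j _
  rw [map_mul, constantCoeff_X, mul_zero]

theorem gens_ker_le (k : ℕ) {A : Type} [CommRing A] (c : ι → A) :
    Ideal.span (Set.range (gens k c)) ≤ RingHom.ker (constantCoeff (σ := Fin k × ι) (R := A)) := by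
  rw [Ideal.span_le]
  rintro x ⟨i, rfl⟩
  exact constantCoeff_gens k c i

theorem tower : ∀ (k : ℕ) (A : Type) [CommRing A] (c : ι → A), GOOD k A c →
    (Ideal.span (Set.range (gens k c)) : Ideal (MvPolynomial (Fin k × ι) A)).IsPrime := by
  intro k
  induction k with
  | zero =>
      intro A _ c h
      haveI : IsDomain A := GOOD_domain h
      have : Set.range (gens (ι := ι) 0 c) = ∅ := Set.range_eq_empty _
      rw [this, Ideal.span_empty]
      exact Ideal.bot_prime
  | succ k ih =>
      intro A _ c h
      obtain ⟨hD, j0, j1, hne, h0, h1, hrec⟩ := h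
      haveI : IsDomain A := hD
      -- abbreviations
      set J : Ideal (MvPolynomial (Fin k × ι) A) := Ideal.span (Set.range (gens k c)) with hJ
      set cB : ι → (MvPolynomial (Fin k × ι) A ⧸ J) :=
        fun j => Ideal.Quotient.mk J (C (c j)) with hcB
      haveI hBdom : IsDomain (MvPolynomial (Fin k × ι) A ⧸ J) := (Ideal.Quotient.isDomain_iff_prime J).mpr
        (ih A c (GOOD_mono k A c ⟨hD, j0, j1, hne, h0, h1, hrec⟩))
      -- the variable-splitting equivalence
      let E1 : MvPolynomial (Fin (k+1) × ι) A ≃ₐ[A] MvPolynomial ι (MvPolynomial (Fin k × ι) A) :=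
        (renameEquiv A (vEquiv ι k)).trans (sumAlgEquiv A ι (Fin k × ι))
      set P : MvPolynomial ι (MvPolynomial (Fin k × ι) A) := ∑ j, C (C (c j)) * X j with hP
      have hE1C : ∀ a : A, E1 (C a) = C (C a) := by
        intro a
        have h1 : (C a : MvPolynomial (Fin (k+1) × ι) A) = algebraMap A _ a := rfl
        rw [h1, AlgEquiv.commutes]
        rfl
      have hE1cast : ∀ i' : Fin k, E1 (gens (k+1) c (Fin.castSucc i')) = C (gens k c i') := by
        intro i'
        rw [gens, map_sum, gens, map_sum]
        apply Finset.sum_congr rfl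
        intro j _
        rw [map_mul, hE1C]
        have hx : E1 (X (Fin.castSucc i', j)) = C (X (i', j)) := by
          simp only [E1, AlgEquiv.trans_apply, renameEquiv_apply, rename_X]
          rw [vEquiv_cast]
          simp [sumAlgEquiv_X_inr]
        rw [hx, ← map_mul]
      have hE1last : E1 (gens (k+1) c (Fin.last k)) = P := by
        rw [gens, map_sum, hP]
        apply Finset.sum_congr rfl
        intro j _
        rw [map_mul, hE1C]
        have hx : E1 (X (Fin.last k, j)) = X j := by
          simp only [E1, AlgEquiv.trans_apply, renameEquiv_apply, rename_X]
          rw [vEquiv_last]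
          simp [sumAlgEquiv_X_inl]
        rw [hx]
      -- ideal computation
      have hrange : Set.range (fun i => E1 (gens (k+1) c i)) =
          (C '' Set.range (gens k c)) ∪ {P} := by
        apply Set.eq_of_subset_of_subset
        · rintro x ⟨i, rfl⟩
          induction i using Fin.lastCases with
          | last => right; show E1 (gens (k+1) c (Fin.last k)) ∈ {P}; rw [hE1last]; rfl
          | cast i' => left; exact ⟨gens k c i', ⟨i', rfl⟩, (hE1cast i').symm⟩
        · rintro x (⟨g, ⟨i', rfl⟩, rfl⟩ | hx)
          · exact ⟨Fin.castSucc i', hE1cast i'⟩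
          · rw [Set.mem_singleton_iff] at hx
            exact ⟨Fin.last k, by show E1 _ = x; rw [hE1last, hx]⟩
      have hmap : Ideal.map (E1 : MvPolynomial (Fin (k+1) × ι) A →+*
            MvPolynomial ι (MvPolynomial (Fin k × ι) A))
          (Ideal.span (Set.range (gens (k+1) c))) = Ideal.map C J ⊔ Ideal.span {P} := by
        rw [Ideal.map_span, ← Set.range_comp]
        have : Set.range ((E1 : MvPolynomial (Fin (k+1) × ι) A →+*
            MvPolynomial ι (MvPolynomial (Fin k × ι) A)) ∘
            gens (k+1) c) = (C '' Set.range (gens k c)) ∪ {P} := hrange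
        rw [this, Ideal.span_union, Ideal.map_span]
      -- behavior of the coefficient-quotient equivalence
      let W := (MvPolynomial.quotientEquivQuotientMvPolynomial (σ := ι) J).symm
      have hW : ∀ f : MvPolynomial ι (MvPolynomial (Fin k × ι) A),
          W (Ideal.Quotient.mk _ f)
            = eval₂Hom (RingHom.comp C (Ideal.Quotient.mk J)) X f := fun f => rfl
      set PB : MvPolynomial ι (MvPolynomial (Fin k × ι) A ⧸ J) := ∑ j, C (cB j) * X j with hPB
      have hWP : W (Ideal.Quotient.mk _ P) = PB := by
        rw [hW, hP, hPB]
        rw [map_sum]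
        apply Finset.sum_congr rfl
        intro j _
        rw [map_mul]
        simp [hcB]
      -- key facts about cB
      have hcB0ne : cB j0 ≠ 0 := by
        rw [hcB]
        simp only
        rw [Ne, Ideal.Quotient.eq_zero_iff_mem]
        intro hmem
        have h0' := gens_ker_le k c hmem
        rw [RingHom.mem_ker, constantCoeff_C] at h0'
        exact h0.ne_zero h0'
      have hβ : ∀ x ∈ J, (Ideal.Quotient.mk (Ideal.span {c j0})).comp
          (constantCoeff (σ := Fin k × ι) (R := A)) x = 0 := by
        intro x hx
        have hle : J ≤ RingHom.ker ((Ideal.Quotient.mk (Ideal.span {c j0})).comp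
            (constantCoeff (σ := Fin k × ι) (R := A))) := by
          rw [hJ, Ideal.span_le]
          rintro y ⟨i, rfl⟩
          rw [SetLike.mem_coe, RingHom.mem_ker, RingHom.comp_apply, constantCoeff_gens, map_zero]
        exact hle hx
      have hcBnm : cB j1 ∉ Ideal.span {cB j0} := by
        intro hmem
        have hspan : Ideal.span {cB j0} =
            Ideal.map (Ideal.Quotient.mk J) (Ideal.span {(C (c j0) : MvPolynomial (Fin k × ι) A)}) := by
          rw [Ideal.map_span, Set.image_singleton]
        rw [hspan] at hmem
        obtain ⟨y, hy, hey⟩ :=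
          (Ideal.mem_map_iff_of_surjective _ Ideal.Quotient.mk_surjective).mp hmem
        have hsub : (C (c j1) : MvPolynomial (Fin k × ι) A) - y ∈ J := by
          rw [← Ideal.Quotient.eq]
          exact hey.symm
        obtain ⟨h', hh'⟩ := Ideal.mem_span_singleton.mp hy
        have hβ1 := hβ _ hsub
        rw [map_sub, RingHom.comp_apply, RingHom.comp_apply, constantCoeff_C, hh', map_mul,
          constantCoeff_C, sub_eq_zero] at hβ1
        apply h1
        rw [← Ideal.Quotient.eq_zero_iff_mem, hβ1, map_mul]
        have hz : (Ideal.Quotient.mk (Ideal.span {c j0})) (c j0) = 0 := by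
          rw [Ideal.Quotient.eq_zero_iff_mem]
          exact Ideal.mem_span_singleton_self _
        rw [hz, zero_mul]
      -- primality of cB j0 via the quotient tower over A ⧸ (c j0)
      have hcB0prime : Prime (cB j0) := by
        rw [← Ideal.span_singleton_prime hcB0ne]
        have hquot : IsDomain ((MvPolynomial (Fin k × ι) A ⧸ J) ⧸ Ideal.span {cB j0}) := by
          set I0 : Ideal A := Ideal.span {c j0} with hI0
          have hmapCI0 : Ideal.map (C : A →+* MvPolynomial (Fin k × ι) A) I0
              = Ideal.span {(C (c j0) : MvPolynomial (Fin k × ι) A)} := by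
            rw [hI0, Ideal.map_span, Set.image_singleton]
          let F1 : ((MvPolynomial (Fin k × ι) A ⧸ J) ⧸ Ideal.span {cB j0}) ≃+*
              ((MvPolynomial (Fin k × ι) A ⧸ J) ⧸
                Ideal.map (Ideal.Quotient.mk J) (Ideal.span {(C (c j0) : MvPolynomial (Fin k × ι) A)})) :=
            Ideal.quotEquivOfEq (by rw [hcB]; simp only; rw [Ideal.map_span, Set.image_singleton])
          let F2 := DoubleQuot.quotQuotEquivQuotSup J
            (Ideal.span {(C (c j0) : MvPolynomial (Fin k × ι) A)})
          let F3 : (MvPolynomial (Fin k × ι) A ⧸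
                (J ⊔ Ideal.span {(C (c j0) : MvPolynomial (Fin k × ι) A)})) ≃+*
              (MvPolynomial (Fin k × ι) A ⧸ (Ideal.map C I0 ⊔ J)) :=
            Ideal.quotEquivOfEq (by rw [hmapCI0, sup_comm])
          let F4 := (DoubleQuot.quotQuotEquivQuotSup (Ideal.map (C : A →+* MvPolynomial (Fin k × ι) A) I0) J).symm
          let W' := (MvPolynomial.quotientEquivQuotientMvPolynomial (σ := Fin k × ι) I0).symm
          have hW' : ∀ f : MvPolynomial (Fin k × ι) A,
              W' (Ideal.Quotient.mk _ f)
                = eval₂Hom (RingHom.comp C (Ideal.Quotient.mk I0)) X f := fun f => rfl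
          have hW'gens : ∀ i : Fin k, W' (Ideal.Quotient.mk _ (gens k c i))
              = gens k (fun j => Ideal.Quotient.mk I0 (c j)) i := by
            intro i
            rw [hW', gens, gens, map_sum]
            apply Finset.sum_congr rfl
            intro j _
            rw [map_mul]
            simp
          have h5 : Ideal.span (Set.range (gens k (fun j => Ideal.Quotient.mk I0 (c j)))) =
              Ideal.map (W'.toRingEquiv.toRingHom :
                (MvPolynomial (Fin k × ι) A ⧸ Ideal.map C I0) →+* _)
                (Ideal.map (Ideal.Quotient.mk (Ideal.map C I0)) J) := by
            show _ = Ideal.map _ (Ideal.map _ (Ideal.span (Set.range (gens k c))))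
            rw [Ideal.map_map, Ideal.map_span, ← Set.range_comp]
            exact congrArg Ideal.span (congrArg Set.range (funext fun i => (hW'gens i).symm))
          let F5 := Ideal.quotientEquiv _ _ W'.toRingEquiv h5
          have htarget : IsDomain (MvPolynomial (Fin k × ι) (A ⧸ I0) ⧸
              Ideal.span (Set.range (gens k (fun j => Ideal.Quotient.mk I0 (c j))))) :=
            (Ideal.Quotient.isDomain_iff_prime _).mpr (ih (A ⧸ I0) _ hrec)
          let Ftot := (((F1.trans F2).trans F3).trans F4).trans F5
          exact Function.Injective.isDomain Ftot.toRingHom Ftot.injective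
        exact (Ideal.Quotient.isDomain_iff_prime _).mp hquot
      -- apply the core lemma
      have hPBprime : (Ideal.span {PB}).IsPrime := by
        rw [hPB]
        exact core cB j0 j1 hne hcB0prime hcBnm
      -- total equivalence
      let EQ1 := Ideal.quotientEquiv (Ideal.span (Set.range (gens (k+1) c)))
        (Ideal.map C J ⊔ Ideal.span {P}) E1.toRingEquiv hmap.symm
      let EQ2 := (DoubleQuot.quotQuotEquivQuotSup (Ideal.map C J) (Ideal.span {P})).symm
      have h3 : Ideal.span {PB} =
          Ideal.map (W.toRingEquiv.toRingHom :
              (MvPolynomial ι (MvPolynomial (Fin k × ι) A) ⧸ Ideal.map C J) →+* _)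
            (Ideal.map (Ideal.Quotient.mk (Ideal.map C J)) (Ideal.span {P})) := by
        have e1 := Ideal.map_map (I := Ideal.span {P})
          (Ideal.Quotient.mk (Ideal.map C J))
          (W.toRingEquiv.toRingHom :
            (MvPolynomial ι (MvPolynomial (Fin k × ι) A) ⧸ Ideal.map C J) →+* _)
        have e2 : Ideal.map
            ((W.toRingEquiv.toRingHom :
                (MvPolynomial ι (MvPolynomial (Fin k × ι) A) ⧸ Ideal.map C J) →+* _).comp
              (Ideal.Quotient.mk (Ideal.map C J))) (Ideal.span {P}) = Ideal.span {PB} := by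
          rw [Ideal.map_span, Set.image_singleton]
          congr 1
          rw [RingHom.comp_apply, ← hWP]
          rfl
        exact (e1.trans e2).symm
      let EQ3 := Ideal.quotientEquiv (Ideal.map (Ideal.Quotient.mk (Ideal.map C J)) (Ideal.span {P})) (Ideal.span {PB}) W.toRingEquiv h3
      let EQtot := (EQ1.trans EQ2).trans EQ3
      haveI hd1 :=
        (Ideal.Quotient.isDomain_iff_prime (Ideal.span {PB})).mpr hPBprime
      haveI hd2 : IsDomain (MvPolynomial (Fin (k+1) × ι) A ⧸
          Ideal.span (Set.range (gens (k+1) c))) :=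
        Function.Injective.isDomain EQtot.toRingHom EQtot.injective
      exact (Ideal.Quotient.isDomain_iff_prime _).mp hd2

end Tower



open MvPolynomial

/-- The quotient ring `O_X = O_amb/(f_1, …, f_n)` is an integral domain. -/
theorem OX_isDomain (n : ℕ) (hn : 1 ≤ n) :
    IsDomain (Oamb n ⧸ Ideal.span (Set.range (fun i : Fin n => fv i))) := by
  classical
  -- split the variables: a-variables outer, z-variables inner
  let E0 : Oamb n ≃ₐ[ℤ] MvPolynomial (Fin n × Fin (n+1)) (MvPolynomial (Fin (n+1)) ℤ) :=
    sumAlgEquiv ℤ (Fin n × Fin (n+1)) (Fin (n+1))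
  have hE0 : ∀ i : Fin n, E0 (fv i)
      = gens (ι := Fin (n+1)) n (fun j => (X j : MvPolynomial (Fin (n+1)) ℤ)) i := by
    intro i
    rw [fv, gens, map_sum]
    apply Finset.sum_congr rfl
    intro j _
    rw [av, zv, map_mul]
    simp only [E0, sumAlgEquiv_X_inl, sumAlgEquiv_X_inr]
    ring
  have hmapE0 : Ideal.map (E0.toRingEquiv.toRingHom : Oamb n →+* _)
      (Ideal.span (Set.range (fun i : Fin n => fv i)))
      = Ideal.span (Set.range (gens (ι := Fin (n+1)) n
          (fun j => (X j : MvPolynomial (Fin (n+1)) ℤ)))) := by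
    rw [Ideal.map_span, ← Set.range_comp]
    exact congrArg Ideal.span (congrArg Set.range (funext fun i => hE0 i))
  let EQ := Ideal.quotientEquiv _ _ E0.toRingEquiv hmapE0.symm
  -- GOOD instance for the z-variables
  have hgood0 := goodX (R := ℤ) n n 0 (by omega)
  have hbot : Ideal.span ((fun i => (X i : MvPolynomial (Fin (n+1)) ℤ)) '' sD n 0) = ⊥ := by
    have : sD n 0 = (∅ : Set (Fin (n+1))) := by
      ext i; simp [sD]
    rw [this, Set.image_empty, Ideal.span_empty]
  let Ebot : (MvPolynomial (Fin (n+1)) ℤ ⧸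
      Ideal.span ((fun i => (X i : MvPolynomial (Fin (n+1)) ℤ)) '' sD n 0))
      ≃+* MvPolynomial (Fin (n+1)) ℤ :=
    (Ideal.quotEquivOfEq hbot).trans (RingEquiv.quotientBot _)
  have hgood : GOOD n (MvPolynomial (Fin (n+1)) ℤ)
      (fun j => (X j : MvPolynomial (Fin (n+1)) ℤ)) := by
    refine GOOD_congr n _ _ _ _ Ebot (fun j => ?_) hgood0
    simp only [Ebot, RingEquiv.trans_apply, Ideal.quotEquivOfEq_mk]
    rfl
  have hprime := tower n (MvPolynomial (Fin (n+1)) ℤ)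
    (fun j => (X j : MvPolynomial (Fin (n+1)) ℤ)) hgood
  haveI hd : IsDomain (MvPolynomial (Fin n × Fin (n+1)) (MvPolynomial (Fin (n+1)) ℤ) ⧸
      Ideal.span (Set.range (gens (ι := Fin (n+1)) n
        (fun j => (X j : MvPolynomial (Fin (n+1)) ℤ))))) :=
    (Ideal.Quotient.isDomain_iff_prime _).mpr hprime
  have hinj : Function.Injective (EQ.toRingHom :
      (Oamb n ⧸ Ideal.span (Set.range (fun i : Fin n => fv i))) →+*
      (MvPolynomial (Fin n × Fin (n+1)) (MvPolynomial (Fin (n+1)) ℤ) ⧸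
        Ideal.span (Set.range (gens (ι := Fin (n+1)) n
          (fun j => (X j : MvPolynomial (Fin (n+1)) ℤ)))))) := fun a b h => EQ.injective h
  exact Function.Injective.isDomain _ hinj
end

section
/- Fix n ≥ 1. In O_X = O_amb/(f_1, ..., f_n), the ideal I_D generated by the images of z_1, ..., z_{n+1} has height (codimension) equal to one. -/
open MvPolynomial

/-- The height of an ideal: the infimum of the heights (in the prime spectrum) of the
minimal primes over it. -/
noncomputable def idealHeight {R : Type*} [CommRing R] (I : Ideal R) : ℕ∞ :=
  ⨅ p : I.minimalPrimes, Order.height (⟨p.1, p.2.1.1⟩ : PrimeSpectrum R)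

section Aux
open Matrix



noncomputable abbrev Az (n : ℕ) : Type := MvPolynomial (Fin n × Fin (n+1)) ℤ
noncomputable abbrev Bw (n : ℕ) : Type := MvPolynomial ((Fin n × Fin (n+1)) ⊕ Unit) ℤ

section Evec
variable {n : ℕ} {S T : Type*} [CommRing S] [CommRing T]

def minor1 (M : Matrix (Fin n) (Fin (n+1)) S) : Matrix (Fin n) (Fin n) S :=
  Matrix.of fun i j => M i j.succ

def Evec (M : Matrix (Fin n) (Fin (n+1)) S) : Fin (n+1) → S :=
  Fin.cases (minor1 M).det
    (fun j' => -((minor1 M).adjugate *ᵥ (fun i => M i 0)) j')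

@[simp] lemma Evec_zero (M : Matrix (Fin n) (Fin (n+1)) S) :
    Evec M 0 = (minor1 M).det := by simp [Evec]

@[simp] lemma Evec_succ (M : Matrix (Fin n) (Fin (n+1)) S) (j : Fin n) :
    Evec M j.succ = -((minor1 M).adjugate *ᵥ (fun i => M i 0)) j := by
  simp [Evec]

lemma Evec_sum (M : Matrix (Fin n) (Fin (n+1)) S) (i : Fin n) :
    ∑ j, M i j * Evec M j = 0 := by
  rw [Fin.sum_univ_succ]
  have h2 : ∑ j' : Fin n, M i j'.succ * Evec M j'.succ
      = -((minor1 M).det * M i 0) := by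
    simp only [Evec_succ, Matrix.mulVec, dotProduct]
    rw [show ∀ g : Fin n → S, ∑ j', M i j'.succ * -(g j') = -∑ j', M i j'.succ * g j' by
      intro g; rw [← Finset.sum_neg_distrib]; exact Finset.sum_congr rfl fun _ _ => mul_neg ..]
    congr 1
    calc ∑ j', M i j'.succ * ∑ k, (minor1 M).adjugate j' k * M k 0
        = ∑ j', ∑ k, minor1 M i j' * (minor1 M).adjugate j' k * M k 0 := by
          apply Finset.sum_congr rfl; intro j' _
          rw [Finset.mul_sum]
          apply Finset.sum_congr rfl; intro k _
          simp [minor1]; ring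
      _ = ∑ k, (∑ j', minor1 M i j' * (minor1 M).adjugate j' k) * M k 0 := by
          rw [Finset.sum_comm]
          exact Finset.sum_congr rfl fun k _ => (Finset.sum_mul ..).symm
      _ = ∑ k, ((minor1 M) * (minor1 M).adjugate) i k * M k 0 := by
          apply Finset.sum_congr rfl; intro k _
          rw [Matrix.mul_apply]
      _ = (minor1 M).det * M i 0 := by
          rw [Matrix.mul_adjugate]
          rw [Finset.sum_eq_single i]
          · simp
          · intro k _ hk
            simp [Matrix.one_apply, Ne.symm hk]
          · simp
  rw [h2]
  simp only [Evec_zero]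
  ring

lemma minor1_map (f : S →+* T) (M : Matrix (Fin n) (Fin (n+1)) S) :
    minor1 (M.map f) = (minor1 M).map f := rfl

lemma Evec_map (f : S →+* T) (M : Matrix (Fin n) (Fin (n+1)) S) (j : Fin (n+1)) :
    f (Evec M j) = Evec (M.map f) j := by
  induction j using Fin.cases with
  | zero =>
      simp only [Evec_zero, minor1_map]
      rw [RingHom.map_det]
      rfl
  | succ j' =>
      have hadj : ((minor1 M).map f).adjugate = ((minor1 M).adjugate).map f := by
        have := RingHom.map_adjugate f (minor1 M)
        simpa [RingHom.mapMatrix_apply] using this.symm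
      simp only [Evec_succ, Matrix.mulVec, dotProduct, map_neg, map_sum, minor1_map, hadj]
      congr 1
      apply Finset.sum_congr rfl
      intro k _
      rw [map_mul f]
      rfl
end Evec

variable {n : ℕ}

noncomputable def Ix (n : ℕ) : Ideal (Oamb n) := Ideal.span (Set.range (fun i : Fin n => fv i))
noncomputable def Jz (n : ℕ) : Ideal (Oamb n) := Ideal.span (Set.range (fun j : Fin (n+1) => zv j))

noncomputable def κ (n : ℕ) : Oamb n →ₐ[ℤ] Az n :=
  aeval (Sum.elim (fun p => X p) (fun _ => 0))
noncomputable def ρ (n : ℕ) : Az n →ₐ[ℤ] Oamb n :=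
  aeval (fun p => av p.1 p.2)

@[simp] lemma κ_av (i : Fin n) (j : Fin (n+1)) : κ n (av i j) = X (i, j) := by
  simp [κ, av]
@[simp] lemma κ_zv (j : Fin (n+1)) : κ n (zv j) = 0 := by simp [κ, zv]
@[simp] lemma ρ_X (p : Fin n × Fin (n+1)) : ρ n (X p) = av p.1 p.2 := by simp [ρ]

lemma κρ (q : Az n) : κ n (ρ n q) = q := by
  have : (κ n).comp (ρ n) = AlgHom.id ℤ (Az n) := by
    apply MvPolynomial.algHom_ext
    intro p
    simp
  calc κ n (ρ n q) = ((κ n).comp (ρ n)) q := rfl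
    _ = q := by rw [this]; rfl

lemma sub_mem_Jz (p : Oamb n) : p - ρ n (κ n p) ∈ Jz n := by
  induction p using MvPolynomial.induction_on with
  | C a => simp [Jz]
  | add p q hp hq =>
      have : p + q - ρ n (κ n (p + q)) = (p - ρ n (κ n p)) + (q - ρ n (κ n q)) := by
        simp [map_add]; ring
      rw [this]; exact Ideal.add_mem _ hp hq
  | mul_X p v hp =>
      cases v with
      | inl pr =>
          have : p * X (Sum.inl pr) - ρ n (κ n (p * X (Sum.inl pr)))
              = (p - ρ n (κ n p)) * av pr.1 pr.2 := by
            rw [_root_.map_mul, _root_.map_mul]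
            have h1 : κ n (X (Sum.inl pr) : Oamb n) = X pr := κ_av pr.1 pr.2
            rw [h1, ρ_X]
            have : (X (Sum.inl pr) : Oamb n) = av pr.1 pr.2 := rfl
            rw [this]; ring
          rw [this]
          exact Ideal.mul_mem_right _ _ hp
      | inr j =>
          have h1 : κ n (X (Sum.inr j) : Oamb n) = 0 := κ_zv j
          rw [_root_.map_mul, h1, mul_zero, map_zero, sub_zero]
          exact Ideal.mul_mem_left _ _ (Ideal.subset_span ⟨j, rfl⟩)

lemma mem_Jz_iff (p : Oamb n) : p ∈ Jz n ↔ κ n p = 0 := by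
  constructor
  · intro hp
    have hle : Jz n ≤ RingHom.ker (κ n).toRingHom := by
      rw [Jz, Ideal.span_le]
      rintro _ ⟨j, rfl⟩
      simp [RingHom.mem_ker]
    exact hle hp
  · intro h
    have := sub_mem_Jz p
    rwa [h, map_zero, sub_zero] at this

lemma Jz_eq_ker : Jz n = RingHom.ker (κ n).toRingHom := by
  ext p; rw [mem_Jz_iff]; rfl

instance Jz_prime : (Jz n).IsPrime := by
  rw [Jz_eq_ker]; exact RingHom.ker_isPrime _

lemma fv_mem_Jz (i : Fin n) : fv i ∈ Jz n := by
  rw [mem_Jz_iff]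
  simp [fv, map_sum]

lemma Ix_le_Jz : Ix n ≤ Jz n := by
  rw [Ix, Ideal.span_le]
  rintro _ ⟨i, rfl⟩
  exact fv_mem_Jz i

-- The generic matrix over Oamb
noncomputable def MR (n : ℕ) : Matrix (Fin n) (Fin (n+1)) (Oamb n) := Matrix.of fun i j => av i j

lemma minor1_MR_det : (minor1 (MR n)).det = Δ₁ n := rfl
noncomputable def η (n : ℕ) : Oamb n →ₐ[ℤ] ℤ :=
  aeval (Sum.elim (fun pr => if pr.2 = pr.1.succ then (1:ℤ) else 0) (fun _ => 0))

lemma η_Δ₁ : η n (Δ₁ n) = 1 := by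
  rw [Δ₁, AlgHom.map_det]
  have : (η n).mapMatrix (Matrix.of fun i j : Fin n => av i j.succ) = 1 := by
    ext i j
    simp only [AlgHom.mapMatrix_apply, Matrix.map_apply, Matrix.of_apply, av, η, aeval_X,
      Sum.elim_inl, Matrix.one_apply]
    rcases eq_or_ne i j with h | h
    · simp [h]
    · rw [if_neg (by simpa [Fin.succ_inj] using Ne.symm h), if_neg h]
  rw [this, Matrix.det_one]

lemma Δ₁_not_mem_Jz : Δ₁ n ∉ Jz n := by
  intro h
  have hker : Jz n ≤ RingHom.ker (η n).toRingHom := by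
    rw [Jz, Ideal.span_le]
    rintro _ ⟨j, rfl⟩
    simp [RingHom.mem_ker, zv, η]
  have h2 := hker h
  rw [RingHom.mem_ker] at h2
  rw [show (η n).toRingHom (Δ₁ n) = η n (Δ₁ n) from rfl, η_Δ₁] at h2
  exact one_ne_zero h2

lemma cramer_id (j : Fin (n+1)) :
    Δ₁ n * zv j - zv 0 * Evec (MR n) j ∈ Ix n := by
  induction j using Fin.cases with
  | zero =>
      rw [Evec_zero, minor1_MR_det, show Δ₁ n * zv 0 - zv 0 * Δ₁ n = 0 by ring]
      exact Ideal.zero_mem _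
  | succ j' =>
      have expand : ∀ k, fv k = av k 0 * zv 0 + ∑ j'' : Fin n, minor1 (MR n) k j'' * zv j''.succ := by
        intro k
        rw [fv, Fin.sum_univ_succ]
        rfl
      have key : Δ₁ n * zv j'.succ - zv 0 * Evec (MR n) j'.succ
          = ∑ k, (minor1 (MR n)).adjugate j' k * fv k := by
        rw [Evec_succ]
        have e1 : ∑ k, (minor1 (MR n)).adjugate j' k * fv k
            = (∑ k, (minor1 (MR n)).adjugate j' k * (av k 0 * zv 0))
              + ∑ k, ∑ j'', (minor1 (MR n)).adjugate j' k * (minor1 (MR n) k j'' * zv j''.succ) := by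
          rw [← Finset.sum_add_distrib]
          refine Finset.sum_congr rfl fun k _ => ?_
          rw [expand k, mul_add, Finset.mul_sum]
        have e2 : ∑ k, ∑ j'', (minor1 (MR n)).adjugate j' k * (minor1 (MR n) k j'' * zv j''.succ)
            = Δ₁ n * zv j'.succ := by
          rw [Finset.sum_comm]
          rw [Finset.sum_congr rfl (fun j'' _ => show
            ∑ k, (minor1 (MR n)).adjugate j' k * (minor1 (MR n) k j'' * zv j''.succ)
              = ((minor1 (MR n)).adjugate * (minor1 (MR n))) j' j'' * zv j''.succ by
            rw [Matrix.mul_apply, Finset.sum_mul]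
            exact Finset.sum_congr rfl fun k _ => by ring)]
          rw [Matrix.adjugate_mul]
          rw [Finset.sum_eq_single j']
          · rw [minor1_MR_det]; simp
          · intro k _ hk
            simp [Matrix.one_apply, Ne.symm hk]
          · simp
        have e3 : zv 0 * ((minor1 (MR n)).adjugate *ᵥ (fun i => MR n i 0)) j'
            = ∑ k, (minor1 (MR n)).adjugate j' k * (av k 0 * zv 0) := by
          show zv 0 * (∑ k, (minor1 (MR n)).adjugate j' k * MR n k 0) = _
          rw [Finset.mul_sum]
          exact Finset.sum_congr rfl fun k _ => by
            show zv 0 * ((minor1 (MR n)).adjugate j' k * av k 0) = _; ring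
        rw [e1, ← e3, e2]
        ring
      rw [key]
      exact Ideal.sum_mem _ fun k _ =>
        Ideal.mul_mem_left _ _ (Ideal.subset_span ⟨k, rfl⟩)
-- The Bw side
noncomputable def wv (n : ℕ) : Bw n := X (Sum.inr ())
noncomputable def MB (n : ℕ) : Matrix (Fin n) (Fin (n+1)) (Bw n) :=
  Matrix.of fun i j => X (Sum.inl (i, j))

noncomputable def φ' (n : ℕ) : Oamb n →ₐ[ℤ] Bw n :=
  aeval (Sum.elim (fun pr => X (Sum.inl pr)) (fun j => wv n * Evec (MB n) j))

noncomputable def QX (n : ℕ) : Oamb n →+* Oamb n ⧸ Ix n := Ideal.Quotient.mk (Ix n)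

noncomputable def δB (n : ℕ) : Bw n →ₐ[ℤ] Oamb n ⧸ Ix n :=
  aeval (Sum.elim (fun pr => QX n (av pr.1 pr.2)) (fun _ => QX n (zv 0)))

noncomputable def ρB (n : ℕ) : Bw n →ₐ[ℤ] Az n :=
  aeval (Sum.elim (fun pr => X pr) (fun _ => 0))

noncomputable def τB (n : ℕ) : Az n →ₐ[ℤ] Bw n :=
  aeval (fun pr => X (Sum.inl pr))

@[simp] lemma φ'_av (i : Fin n) (j : Fin (n+1)) : φ' n (av i j) = X (Sum.inl (i,j)) := by
  simp [φ', av]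
@[simp] lemma φ'_zv (j : Fin (n+1)) : φ' n (zv j) = wv n * Evec (MB n) j := by
  simp [φ', zv]
@[simp] lemma δB_a (pr : Fin n × Fin (n+1)) :
    δB n (X (Sum.inl pr)) = QX n (av pr.1 pr.2) := by simp [δB]
@[simp] lemma δB_w : δB n (wv n) = QX n (zv 0) := by simp [δB, wv]

lemma Ix_le_ker_φ' : Ix n ≤ RingHom.ker (φ' n).toRingHom := by
  rw [Ix, Ideal.span_le]
  rintro _ ⟨i, rfl⟩
  have : φ' n (fv i) = wv n * ∑ j, MB n i j * Evec (MB n) j := by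
    rw [fv, map_sum, Finset.mul_sum]
    refine Finset.sum_congr rfl fun j _ => ?_
    rw [_root_.map_mul, φ'_av, φ'_zv]
    show MB n i j * (wv n * Evec (MB n) j) = _
    ring
  have h0 : φ' n (fv i) = 0 := by rw [this, Evec_sum, mul_zero]
  simpa [RingHom.mem_ker] using h0

lemma ker_φ'_le_Jz : (RingHom.ker (φ' n).toRingHom : Ideal (Oamb n)) ≤ Jz n := by
  intro p hp
  rw [RingHom.mem_ker] at hp
  rw [mem_Jz_iff]
  have hcomp : (ρB n).comp (φ' n) = κ n := by
    apply MvPolynomial.algHom_ext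
    rintro (pr | j)
    · show ρB n (φ' n (X (Sum.inl pr))) = κ n (X (Sum.inl pr))
      rw [show (X (Sum.inl pr) : Oamb n) = av pr.1 pr.2 from rfl, κ_av, φ'_av]
      simp [ρB]
    · show ρB n (φ' n (zv j)) = κ n (zv j)
      rw [φ'_zv, κ_zv, _root_.map_mul]
      have : ρB n (wv n) = 0 := by simp [ρB, wv]
      rw [this, zero_mul]
  calc κ n p = ρB n (φ' n p) := by rw [← hcomp]; rfl
    _ = 0 := by rw [show φ' n p = 0 from hp, map_zero]

-- φ'(zv 0) ≠ 0
noncomputable def ζB (n : ℕ) : Bw n →ₐ[ℤ] ℤ :=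
  aeval (Sum.elim (fun pr => if pr.2 = pr.1.succ then (1:ℤ) else 0) (fun _ => 1))

lemma φ'_zv0_ne : φ' n (zv 0) ≠ 0 := by
  intro h
  have : ζB n (φ' n (zv 0)) = 1 := by
    rw [φ'_zv, _root_.map_mul, Evec_zero, AlgHom.map_det]
    have h1 : ζB n (wv n) = 1 := by simp [ζB, wv]
    have h2 : (ζB n).mapMatrix (minor1 (MB n)) = 1 := by
      ext i j
      simp only [AlgHom.mapMatrix_apply, Matrix.map_apply, minor1, MB, Matrix.of_apply, ζB,
        aeval_X, Sum.elim_inl, Matrix.one_apply]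
      rcases eq_or_ne i j with h | h
      · simp [h]
      · rw [if_neg (by simpa [Fin.succ_inj] using Ne.symm h), if_neg h]
    rw [h1, h2, Matrix.det_one, one_mul]
  rw [h, map_zero] at this
  exact zero_ne_one this

-- compatibility of Evec under δB and QX
lemma MB_map_δB : (MB n).map (δB n) = (MR n).map (QX n) := by
  ext i j
  simp [MB, MR, Matrix.map_apply]

lemma δB_Evec (j : Fin (n+1)) : δB n (Evec (MB n) j) = QX n (Evec (MR n) j) := by
  have h1 := Evec_map (δB n).toRingHom (MB n) j
  have h2 := Evec_map (QX n) (MR n) j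
  rw [show ((δB n).toRingHom : Bw n → _) = δB n from rfl] at h1
  rw [h1, h2]
  congr 1
  exact MB_map_δB

noncomputable def ΔB (n : ℕ) : Bw n := (minor1 (MB n)).det

lemma δB_ΔB : δB n (ΔB n) = QX n (Δ₁ n) := by
  have := δB_Evec (n := n) 0
  rwa [Evec_zero, Evec_zero, minor1_MR_det] at this

lemma SUR (r : Oamb n) : ∃ (m : ℕ) (b : Bw n), δB n b = QX n (Δ₁ n ^ m * r) := by
  induction r using MvPolynomial.induction_on with
  | C a =>
      refine ⟨0, C a, ?_⟩
      rw [pow_zero, one_mul]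
      have : (δB n).toRingHom.comp (C : ℤ →+* Bw n)
          = (QX n).comp (C : ℤ →+* Oamb n) := by
        apply RingHom.ext_int
      exact RingHom.congr_fun this a
  | add p q hp hq =>
      obtain ⟨mp, bp, hp⟩ := hp
      obtain ⟨mq, bq, hq⟩ := hq
      refine ⟨mp + mq, ΔB n ^ mq * bp + ΔB n ^ mp * bq, ?_⟩
      rw [map_add, _root_.map_mul, _root_.map_mul, map_pow, map_pow, δB_ΔB, hp, hq,
        ← map_pow, ← _root_.map_mul, ← map_pow, ← _root_.map_mul, ← map_add]
      congr 1
      ring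
  | mul_X p v hp =>
      obtain ⟨m, b, hb⟩ := hp
      cases v with
      | inl pr =>
          refine ⟨m, b * X (Sum.inl pr), ?_⟩
          rw [_root_.map_mul, hb, δB_a, ← _root_.map_mul]
          congr 1
          show Δ₁ n ^ m * p * av pr.1 pr.2 = Δ₁ n ^ m * (p * X (Sum.inl pr))
          rw [av]; ring
      | inr j =>
          refine ⟨m + 1, b * (wv n * Evec (MB n) j), ?_⟩
          rw [_root_.map_mul, _root_.map_mul, hb, δB_w, δB_Evec,
            ← _root_.map_mul, ← _root_.map_mul]
          have hc : QX n (zv 0 * Evec (MR n) j) = QX n (Δ₁ n * zv j) := by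
            rw [QX, Ideal.Quotient.mk_eq_mk_iff_sub_mem]
            have := cramer_id (n := n) j
            have h2 : zv 0 * Evec (MR n) j - Δ₁ n * zv j
                = -(Δ₁ n * zv j - zv 0 * Evec (MR n) j) := by ring
            rw [h2]
            exact neg_mem this
          calc QX n (Δ₁ n ^ m * p * (zv 0 * Evec (MR n) j))
              = QX n (Δ₁ n ^ m * p) * QX n (zv 0 * Evec (MR n) j) := by rw [_root_.map_mul]
            _ = QX n (Δ₁ n ^ m * p) * QX n (Δ₁ n * zv j) := by rw [hc]
            _ = QX n (Δ₁ n ^ (m+1) * (p * X (Sum.inr j))) := by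
                rw [← _root_.map_mul]
                congr 1
                show Δ₁ n ^ m * p * (Δ₁ n * zv j) = Δ₁ n ^ (m + 1) * (p * zv j)
                ring
lemma DEC (b : Bw n) : b - τB n (ρB n b) ∈ Ideal.span {wv n} := by
  induction b using MvPolynomial.induction_on with
  | C a => simp [τB, ρB]
  | add p q hp hq =>
      have : p + q - τB n (ρB n (p + q)) = (p - τB n (ρB n p)) + (q - τB n (ρB n q)) := by
        simp only [map_add]; ring
      rw [this]; exact Ideal.add_mem _ hp hq
  | mul_X p v hp =>
      cases v with
      | inl pr =>
          have : p * X (Sum.inl pr) - τB n (ρB n (p * X (Sum.inl pr)))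
              = (p - τB n (ρB n p)) * X (Sum.inl pr) := by
            rw [_root_.map_mul, _root_.map_mul]
            have h1 : ρB n (X (Sum.inl pr) : Bw n) = X pr := by simp [ρB]
            have h2 : τB n (X pr : Az n) = X (Sum.inl pr) := by simp [τB]
            rw [h1, h2]; ring
          rw [this]
          exact Ideal.mul_mem_right _ _ hp
      | inr u =>
          have h1 : ρB n (X (Sum.inr u) : Bw n) = 0 := by simp [ρB]
          rw [_root_.map_mul, h1, mul_zero, map_zero, sub_zero]
          have : (X (Sum.inr u) : Bw n) = wv n := by cases u; rfl
          rw [this]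
          exact Ideal.mul_mem_left _ _ (Ideal.subset_span rfl)

lemma δτ (q : Az n) : δB n (τB n q) = QX n (ρ n q) := by
  have hcomp : (δB n).comp (τB n) = (Ideal.Quotient.mkₐ ℤ (Ix n)).comp (ρ n) := by
    apply MvPolynomial.algHom_ext
    intro pr
    show δB n (τB n (X pr)) = Ideal.Quotient.mkₐ ℤ (Ix n) (ρ n (X pr))
    have h2 : τB n (X pr : Az n) = X (Sum.inl pr) := by simp [τB]
    rw [h2, δB_a, ρ_X]
    rfl
  calc δB n (τB n q) = ((δB n).comp (τB n)) q := rfl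
    _ = ((Ideal.Quotient.mkₐ ℤ (Ix n)).comp (ρ n)) q := by rw [hcomp]
    _ = QX n (ρ n q) := rfl

lemma wv_not_unit : ¬ IsUnit (wv n) := by
  intro h
  have := h.map (constantCoeff (R := ℤ) (σ := (Fin n × Fin (n+1)) ⊕ Unit))
  rw [wv, constantCoeff_X] at this
  exact not_isUnit_zero this
-- The ideal I_D in the quotient ring
noncomputable def IDI (n : ℕ) : Ideal (Oamb n ⧸ Ix n) := (Jz n).map (QX n)

lemma IDI_prime : (IDI n).IsPrime :=
  Ideal.map_isPrime_of_surjective Ideal.Quotient.mk_surjective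
    (by rw [Ideal.mk_ker]; exact Ix_le_Jz)

lemma ker_QX : RingHom.ker (QX n) = Ix n := Ideal.mk_ker

lemma QX_eq : QX n = Ideal.Quotient.mk (Ix n) := rfl

lemma comap_IDI : Ideal.comap (QX n) (IDI n) = Jz n := by
  rw [IDI, QX_eq, Ideal.comap_map_of_surjective _ Ideal.Quotient.mk_surjective]
  have h1 : Ideal.comap (Ideal.Quotient.mk (Ix n)) ⊥ = Ix n := Ideal.mk_ker
  rw [h1]
  exact sup_eq_left.mpr Ix_le_Jz

lemma comap_QX_strictMono {A B : Ideal (Oamb n ⧸ Ix n)} (h : A < B) :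
    Ideal.comap (QX n) A < Ideal.comap (QX n) B := by
  refine lt_of_le_of_ne (Ideal.comap_mono h.le) fun he => h.ne ?_
  rw [← Ideal.map_comap_of_surjective (QX n) Ideal.Quotient.mk_surjective A, he,
    Ideal.map_comap_of_surjective (QX n) Ideal.Quotient.mk_surjective B]

noncomputable def Pt1 (n : ℕ) : PrimeSpectrum (Oamb n ⧸ Ix n) := ⟨IDI n, IDI_prime⟩

-- lower bound data
noncomputable def P0I (n : ℕ) : Ideal (Oamb n ⧸ Ix n) :=
  (RingHom.ker (φ' n).toRingHom).map (QX n)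

lemma P0I_prime : (P0I n).IsPrime := by
  haveI : (RingHom.ker (φ' n).toRingHom).IsPrime := RingHom.ker_isPrime _
  exact Ideal.map_isPrime_of_surjective Ideal.Quotient.mk_surjective
    (by rw [Ideal.mk_ker]; exact Ix_le_ker_φ')

lemma P0I_lt_IDI : P0I n < IDI n := by
  refine lt_of_le_of_ne (Ideal.map_mono ker_φ'_le_Jz) fun he => ?_
  have he' : Ideal.map (QX n) (RingHom.ker (φ' n).toRingHom) = Ideal.map (QX n) (Jz n) := he
  have hc : RingHom.ker (φ' n).toRingHom ⊔ Ix n = Jz n ⊔ Ix n := by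
    have h1 := Ideal.comap_map_of_surjective (Ideal.Quotient.mk (Ix n))
      Ideal.Quotient.mk_surjective (RingHom.ker (φ' n).toRingHom)
    have h2 := Ideal.comap_map_of_surjective (Ideal.Quotient.mk (Ix n))
      Ideal.Quotient.mk_surjective (Jz n)
    rw [show Ideal.comap (Ideal.Quotient.mk (Ix n)) ⊥ = Ix n from Ideal.mk_ker] at h1 h2
    rw [← h1, ← h2]
    rw [QX_eq] at he'
    rw [he']
  rw [sup_eq_left.mpr Ix_le_ker_φ', sup_eq_left.mpr Ix_le_Jz] at hc
  have hz : zv (0 : Fin (n+1)) ∈ RingHom.ker (φ' n).toRingHom := by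
    rw [hc]; exact Ideal.subset_span ⟨0, rfl⟩
  rw [RingHom.mem_ker] at hz
  exact φ'_zv0_ne hz

lemma one_le_height_Pt1 : 1 ≤ Order.height (Pt1 n) := by
  let Pt0 : PrimeSpectrum (Oamb n ⧸ Ix n) := ⟨P0I n, P0I_prime⟩
  have hlt : Pt0 < Pt1 n := (PrimeSpectrum.asIdeal_lt_asIdeal _ _).mp P0I_lt_IDI
  let chain : LTSeries (PrimeSpectrum (Oamb n ⧸ Ix n)) :=
    ⟨1, ![Pt0, Pt1 n], fun i => by fin_cases i; simpa using hlt⟩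
  have hlast : chain.last = Pt1 n := by
    show (![Pt0, Pt1 n] : Fin 2 → _) (Fin.last 1) = Pt1 n
    rfl
  have := Order.length_le_height_last (p := chain)
  rw [hlast] at this
  exact this

-- upper bound
lemma height_Pt1_le_one : Order.height (Pt1 n) ≤ 1 := by
  rw [Order.height_le_iff]
  intro q hq
  by_contra hcon
  have hlen : 1 < q.length := by
    rw [not_le] at hcon
    exact_mod_cast hcon
  -- three strictly increasing primes
  set x0 := q.toFun ⟨0, by omega⟩
  set x1 := q.toFun ⟨1, by omega⟩
  set x2 := q.toFun ⟨2, by omega⟩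
  have hx01 : x0 < x1 := q.strictMono (by simp [Fin.lt_def])
  have hx12 : x1 < x2 := q.strictMono (by simp [Fin.lt_def])
  have hx2 : x2 ≤ Pt1 n := le_trans (q.monotone (by simp [Fin.le_def, Fin.last]; omega)) hq
  have hP01 : x0.asIdeal < x1.asIdeal := (PrimeSpectrum.asIdeal_lt_asIdeal _ _).mpr hx01
  have hP12 : x1.asIdeal < x2.asIdeal := (PrimeSpectrum.asIdeal_lt_asIdeal _ _).mpr hx12
  have hP2 : x2.asIdeal ≤ IDI n := hx2
  -- contractions to Oamb
  have hp2_le : Ideal.comap (QX n) x2.asIdeal ≤ Jz n := by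
    rw [← comap_IDI]; exact Ideal.comap_mono hP2
  have hp1_le : Ideal.comap (QX n) x1.asIdeal ≤ Jz n :=
    le_trans (Ideal.comap_mono hP12.le) hp2_le
  have hp0_le : Ideal.comap (QX n) x0.asIdeal ≤ Jz n :=
    le_trans (Ideal.comap_mono hP01.le) hp1_le
  -- transfer strict inclusions along δB
  have key : ∀ Pa Pb : Ideal (Oamb n ⧸ Ix n), Pa.IsPrime →
      Ideal.comap (QX n) Pa ≤ Jz n → Pa < Pb →
      Ideal.comap (δB n).toRingHom Pa < Ideal.comap (δB n).toRingHom Pb := by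
    intro Pa Pb hPa hPale hab
    have hplt : Ideal.comap (QX n) Pa < Ideal.comap (QX n) Pb := comap_QX_strictMono hab
    obtain ⟨r, hrb, hra⟩ := SetLike.exists_of_lt hplt
    obtain ⟨m, b, hb⟩ := SUR (n := n) r
    refine lt_of_le_of_ne (Ideal.comap_mono hab.le) fun he => ?_
    have hbmem : b ∈ Ideal.comap (δB n).toRingHom Pb := by
      rw [Ideal.mem_comap]
      show δB n b ∈ Pb
      rw [hb]
      have : Δ₁ n ^ m * r ∈ Ideal.comap (QX n) Pb := Ideal.mul_mem_left _ _ hrb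
      exact this
    rw [← he, Ideal.mem_comap] at hbmem
    have hQmem : Δ₁ n ^ m * r ∈ Ideal.comap (QX n) Pa := by
      rw [Ideal.mem_comap]
      show QX n (Δ₁ n ^ m * r) ∈ Pa
      rw [← hb]; exact hbmem
    haveI : (Ideal.comap (QX n) Pa).IsPrime := Ideal.IsPrime.comap _
    rcases ‹(Ideal.comap (QX n) Pa).IsPrime›.mem_or_mem hQmem with h | h
    · have hΔ : Δ₁ n ∈ Ideal.comap (QX n) Pa :=
        (Ideal.IsPrime.comap (QX n) (hK := hPa)).mem_of_pow_mem m h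
      exact Δ₁_not_mem_Jz (hPale hΔ)
    · exact hra h
  haveI h0p := x0.isPrime
  haveI h1p := x1.isPrime
  have hQ01 := key x0.asIdeal x1.asIdeal x0.isPrime hp0_le hP01
  have hQ12 := key x1.asIdeal x2.asIdeal x1.isPrime hp1_le hP12
  -- Q2 is inside the principal prime (w)
  have hQ2w : Ideal.comap (δB n).toRingHom x2.asIdeal ≤ Ideal.span {wv n} := by
    intro b hb
    rw [Ideal.mem_comap] at hb
    have hbJ : δB n b ∈ IDI n := hP2 hb
    have hdec := DEC (n := n) b
    have hδdec : δB n (b - τB n (ρB n b)) ∈ IDI n := by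
      obtain ⟨u, hu⟩ := Ideal.mem_span_singleton.mp hdec
      rw [hu, _root_.map_mul]
      have hw : δB n (wv n) ∈ IDI n := by
        rw [δB_w]
        exact Ideal.mem_map_of_mem _ (Ideal.subset_span ⟨0, rfl⟩)
      exact Ideal.mul_mem_right _ _ hw
    have hτ : δB n (τB n (ρB n b)) ∈ IDI n := by
      have : δB n (τB n (ρB n b)) = δB n b - δB n (b - τB n (ρB n b)) := by
        rw [map_sub]; ring
      rw [this]
      exact Ideal.sub_mem _ hbJ hδdec
    rw [δτ] at hτ
    have hρ : ρ n (ρB n b) ∈ Jz n := by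
      rw [← comap_IDI]
      exact hτ
    rw [mem_Jz_iff, κρ] at hρ
    have : b - τB n (0 : Az n) ∈ Ideal.span {wv n} := by rw [← hρ]; exact hdec
    rwa [map_zero, sub_zero] at this
  -- now derive the contradiction
  set Q1 := Ideal.comap (δB n).toRingHom x1.asIdeal with hQ1def
  haveI hQ1p : Q1.IsPrime := Ideal.IsPrime.comap _
  have hwQ1 : wv n ∉ Q1 := by
    intro hw
    have : Ideal.comap (δB n).toRingHom x2.asIdeal ≤ Q1 :=
      le_trans hQ2w ((Ideal.span_singleton_le_iff_mem _).mpr hw)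
    exact hQ12.not_ge this
  have hQ1w : Q1 ≤ Ideal.span {wv n} := le_trans hQ12.le hQ2w
  have hpow : ∀ k : ℕ, Q1 ≤ (Ideal.span {wv n}) ^ k := by
    intro k
    induction k with
    | zero => simp
    | succ k ih =>
        intro x hx
        obtain ⟨y, hy⟩ := Ideal.mem_span_singleton.mp (hQ1w hx)
        have hyQ1 : y ∈ Q1 := by
          rcases hQ1p.mem_or_mem (hy ▸ hx) with h | h
          · exact absurd h hwQ1
          · exact h
        rw [hy, pow_succ, mul_comm (wv n) y]
        exact Ideal.mul_mem_mul (ih hyQ1) (Ideal.mem_span_singleton_self _)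
  have hbot : Q1 = ⊥ := by
    have hne : Ideal.span {wv n} ≠ ⊤ := by
      rw [Ne, Ideal.span_singleton_eq_top]
      exact wv_not_unit
    have hib := Ideal.iInf_pow_eq_bot_of_isDomain (I := Ideal.span {wv n}) hne
    have hle : Q1 ≤ (⊥ : Ideal (Bw n)) := by rw [← hib]; exact le_iInf hpow
    exact le_bot_iff.mp hle
  have := key x0.asIdeal x1.asIdeal x0.isPrime hp0_le hP01
  rw [← hQ1def] at this
  rw [hbot] at this
  exact not_lt_bot this

lemma height_Pt1 : Order.height (Pt1 n) = 1 :=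
  le_antisymm height_Pt1_le_one one_le_height_Pt1
lemma ID_eq_IDI :
    Ideal.span (Set.range fun j : Fin (n+1) => QX n (zv j)) = IDI n := by
  rw [IDI, Jz, Ideal.map_span, ← Set.range_comp]
  rfl


end Aux


/-- In `O_X = O_amb/(f_1, …, f_n)`, the ideal `I_D` generated by the images of
`z_1, …, z_{n+1}` has height one. -/
theorem ID_height_eq_one (n : ℕ) (hn : 1 ≤ n) :
    idealHeight
      (Ideal.span (Set.range fun j : Fin (n+1) =>
        Ideal.Quotient.mk (Ideal.span (Set.range (fun i : Fin n => fv i))) (zv j))) = 1 := by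
  have hID : Ideal.span (Set.range fun j : Fin (n+1) =>
      Ideal.Quotient.mk (Ideal.span (Set.range (fun i : Fin n => fv i))) (zv j)) = IDI n :=
    ID_eq_IDI
  rw [hID]
  haveI : (IDI n).IsPrime := IDI_prime
  have hmin : (IDI n).minimalPrimes = {IDI n} := Ideal.minimalPrimes_eq_subsingleton_self
  unfold idealHeight
  apply le_antisymm
  · have hmem : IDI n ∈ (IDI n).minimalPrimes := by rw [hmin]; rfl
    have hle := iInf_le (fun p : (IDI n).minimalPrimes =>
      Order.height (⟨p.1, p.2.1.1⟩ : PrimeSpectrum (Oamb n ⧸ Ix n))) ⟨IDI n, hmem⟩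
    refine le_trans hle ?_
    exact le_of_eq (height_Pt1 (n := n))
  · apply le_iInf
    rintro ⟨p, hp⟩
    have hps : p = IDI n := by have hp' : p ∈ (IDI n).minimalPrimes := hp; rw [hmin] at hp'; exact hp'
    subst hps
    exact ge_of_eq (height_Pt1 (n := n))
end
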